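/- arXiv:1910.06927 — 10 statements merged into one kernel-verified Lean document; each statement's English description precedes it below -/
import Mathlib

section
/- Let α be a positive real number with α ≠ 1. Suppose u : [0,1] → ℝ is a Lebesgue-measurable function satisfying u(1-x) + (1-x)^α · u(y/(1-x)) = u(y) + (1-y)^α · u((1-x-y)/(1-y)) for all x, y ∈ [0,1) with x + y ≤ 1. Then there exists a real constant λ such that u(x) = λ · (1/(1-α)) · (x^α + (1-x)^α - 1) for all x ∈ [0,1]. -/
/-!
Putting `x = 1 - a`, `y = a t` in `(⋆)` gives the product rule
`D (a t) = D a + a^α D t - (1 - a t)^α D (a (1 - t) / (1 - a t))`, which holds for `u` and, after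
symmetrising `(⋆)` in `x` and `y`, also for the skew part `g x = u x - u (1 - x)`. Evaluating the
product rule at `t = 1/2`, at `a = 1/2`, and at the point `2 (1 - a) / (2 - a)` gives three linear
relations. For antisymmetric `g` they force `(4 · 2^(-α) - 1) g = 0`, so `g = 0` unless `α = 2`.
For `α = 2` the factor vanishes; instead the product rule at `(a, t)` and `(t, a)` gives
`g (a t) = a g t + t g a`, so `g` is additive on `[0, 1]`. Only here is measurability needed: the
`1`-periodic extension of `g` is a measurable additive map `ℝ → ℝ`, hence linear, hence zero.
Thus `u` is symmetric, and for the symmetric solution `D = u - c s_α` vanishing at `1/2` the same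
three relations force `(2^(1-α) - 1) D = 0`.
-/

open Real Set

def FundamentalEquation (α : ℝ) (u : ℝ → ℝ) : Prop :=
  ∀ x y : ℝ, 0 ≤ x → x < 1 → 0 ≤ y → y < 1 → x + y ≤ 1 →
    u (1 - x) + (1 - x) ^ α * u (y / (1 - x)) = u y + (1 - y) ^ α * u ((1 - x - y) / (1 - y))

def ProductRule (α : ℝ) (D : ℝ → ℝ) : Prop :=
  ∀ a t : ℝ, 0 < a → a ≤ 1 → 0 ≤ t → t ≤ 1 → a * t < 1 →
    D (a * t) = D a + a ^ α * D t - (1 - a * t) ^ α * D (a * (1 - t) / (1 - a * t))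

noncomputable def binaryTsallis (α x : ℝ) : ℝ := 1 / (1 - α) * (x ^ α + (1 - x) ^ α - 1)

def skewPart (u : ℝ → ℝ) (x : ℝ) : ℝ := u x - u (1 - x)

lemma skewPart_one_sub (u : ℝ → ℝ) (x : ℝ) : skewPart u (1 - x) = -skewPart u x := by
  simp [skewPart]

lemma half_rpow_ne_half_rpow {β γ : ℝ} (h : β ≠ γ) : (1 / 2 : ℝ) ^ β ≠ (1 / 2) ^ γ :=
  fun h' => h ((Real.rpow_right_inj (by norm_num) (by norm_num)).1 h')

lemma half_rpow_ne_one {α : ℝ} (hα : α ≠ 0) : (1 / 2 : ℝ) ^ α ≠ 1 := by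
  simpa using half_rpow_ne_half_rpow hα

lemma rpow_mul_div_rpow {p q : ℝ} (α : ℝ) (hp : 0 ≤ p) (hq : 0 < q) :
    q ^ α * (p / q) ^ α = p ^ α := by
  rw [← Real.mul_rpow hq.le (div_nonneg hp hq.le), mul_div_cancel₀ _ hq.ne']

lemma fundamentalEquation_binaryTsallis (α : ℝ) : FundamentalEquation α (binaryTsallis α) := by
  intro x y hx0 hx1 hy0 hy1 hxy
  have hx : 0 < 1 - x := by linarith
  have hy : 0 < 1 - y := by linarith
  have r1 : 1 - y / (1 - x) = (1 - x - y) / (1 - x) := by field_simp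
  have r2 : 1 - (1 - x - y) / (1 - y) = x / (1 - y) := by field_simp; ring
  simp only [binaryTsallis, sub_sub_cancel, r1, r2]
  linear_combination 1 / (1 - α) * (rpow_mul_div_rpow α hy0 hx
    + rpow_mul_div_rpow α (by linarith : 0 ≤ 1 - x - y) hx
    - rpow_mul_div_rpow α (by linarith : 0 ≤ 1 - x - y) hy - rpow_mul_div_rpow α hx0 hy)

namespace FundamentalEquation

variable {α : ℝ} {u v : ℝ → ℝ}

lemma sub_const_mul (hu : FundamentalEquation α u) (hv : FundamentalEquation α v) (c : ℝ) :
    FundamentalEquation α fun x => u x - c * v x := by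
  intro x y hx0 hx1 hy0 hy1 hxy
  linear_combination hu x y hx0 hx1 hy0 hy1 hxy - c * hv x y hx0 hx1 hy0 hy1 hxy

lemma productRule (hu : FundamentalEquation α u) : ProductRule α u := by
  intro a t ha0 ha1 ht0 ht1 hat
  have h := hu (1 - a) (a * t) (by linarith) (by linarith) (by positivity) hat (by nlinarith)
  rw [sub_sub_cancel, mul_div_cancel_left₀ _ ha0.ne'] at h
  rw [mul_one_sub]
  linarith

lemma skewPart_add (hu : FundamentalEquation α u) {x y : ℝ} (hx0 : 0 ≤ x) (hx1 : x < 1)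
    (hy0 : 0 ≤ y) (hy1 : y < 1) (hxy : x + y ≤ 1) :
    (1 - x) ^ α * skewPart u (y / (1 - x)) + (1 - y) ^ α * skewPart u (x / (1 - y))
      = skewPart u x + skewPart u y := by
  have hx : 1 - x ≠ 0 := by linarith
  have hy : 1 - y ≠ 0 := by linarith
  have e1 := hu x y hx0 hx1 hy0 hy1 hxy
  have e2 := hu y x hy0 hy1 hx0 hx1 (by linarith)
  rw [show (1 - x - y) / (1 - y) = 1 - x / (1 - y) by field_simp; ring] at e1
  rw [show (1 - y - x) / (1 - x) = 1 - y / (1 - x) by field_simp; ring] at e2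
  simp only [skewPart]
  linear_combination e1 + e2

lemma productRule_skewPart (hu : FundamentalEquation α u) : ProductRule α (skewPart u) := by
  intro a t ha0 ha1 ht0 ht1 hat
  have h := hu.skewPart_add (x := 1 - a) (y := a * t) (by linarith) (by linarith) (by positivity)
    hat (by nlinarith)
  have hat' : 1 - a * t ≠ 0 := by linarith
  rw [sub_sub_cancel, mul_div_cancel_left₀ _ ha0.ne',
    show (1 - a) / (1 - a * t) = 1 - a * (1 - t) / (1 - a * t) by field_simp; ring,
    skewPart_one_sub, skewPart_one_sub] at h
  linarith

end FundamentalEquation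

lemma apply_half_eq_zero_of_antisymm {D : ℝ → ℝ} (hanti : ∀ x, D (1 - x) = -D x) :
    D (1 / 2) = 0 := by
  linarith [hanti (1 / 2), show (1 : ℝ) - 1 / 2 = 1 / 2 by norm_num]

namespace ProductRule

variable {α : ℝ} {D : ℝ → ℝ}

lemma apply_zero (hD : ProductRule α D) (hα : α ≠ 0) : D 0 = 0 := by
  have h := hD (1 / 2) 0 (by norm_num) (by norm_num) le_rfl zero_le_one (by norm_num)
  simp only [mul_zero, sub_zero, mul_one, div_one, one_rpow, one_mul] at h
  exact (mul_eq_zero.1 (by linear_combination h : (1 - (1 / 2 : ℝ) ^ α) * D 0 = 0)).resolve_left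
    (sub_ne_zero.2 (half_rpow_ne_one hα).symm)

lemma apply_one (hD : ProductRule α D) (hα : α ≠ 0) : D 1 = 0 := by
  have h := hD 1 (1 / 2) one_pos le_rfl (by norm_num) (by norm_num) (by norm_num)
  norm_num at h
  exact (mul_eq_zero.1 (by linear_combination -h : (1 - (1 / 2 : ℝ) ^ α) * D 1 = 0)).resolve_left
    (sub_ne_zero.2 (half_rpow_ne_one hα).symm)

lemma apply_div_two_sub (hD : ProductRule α D) (hhalf : D (1 / 2) = 0) {a : ℝ} (ha0 : 0 < a)
    (ha1 : a ≤ 1) : ((2 - a) / 2) ^ α * D (a / (2 - a)) = D a - D (a / 2) := by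
  have h := hD a (1 / 2) ha0 ha1 (by norm_num) (by norm_num) (by linarith)
  have h2a : (2 : ℝ) - a ≠ 0 := by linarith
  rw [hhalf, show a * (1 / 2) = a / 2 by ring, show 1 - a / 2 = (2 - a) / 2 by ring,
    show a * (1 - 1 / 2) / ((2 - a) / 2) = a / (2 - a) by field_simp; ring] at h
  linarith

lemma apply_one_sub_div_two_sub (hD : ProductRule α D) (hhalf : D (1 / 2) = 0) {a : ℝ}
    (ha0 : 0 ≤ a) (ha1 : a ≤ 1) :
    ((2 - a) / 2) ^ α * D ((1 - a) / (2 - a)) = (1 / 2) ^ α * D a - D (a / 2) := by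
  have h := hD (1 / 2) a (by norm_num) (by norm_num) ha0 ha1 (by linarith)
  have h2a : (2 : ℝ) - a ≠ 0 := by linarith
  rw [hhalf, show 1 / 2 * a = a / 2 by ring, show 1 - a / 2 = (2 - a) / 2 by ring,
    show 1 / 2 * (1 - a) / ((2 - a) / 2) = (1 - a) / (2 - a) by field_simp] at h
  linarith

lemma apply_one_sub (hD : ProductRule α D) (hhalf : D (1 / 2) = 0) {a : ℝ} (ha0 : 0 < a)
    (ha1 : a < 1) :
    (1 / 2) ^ α * D (1 - a) =
      ((2 - a) / 2) ^ α * (D (2 * ((1 - a) / (2 - a))) - D ((1 - a) / (2 - a))) := by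
  have h2a : 0 < 2 - a := by linarith
  have h := hD.apply_div_two_sub hhalf (a := 2 * ((1 - a) / (2 - a))) (by positivity)
    (by rw [mul_div_assoc', div_le_one h2a]; linarith)
  rw [show (2 - 2 * ((1 - a) / (2 - a))) / 2 = 1 / (2 - a) by field_simp; ring,
    show 2 * ((1 - a) / (2 - a)) / (2 - 2 * ((1 - a) / (2 - a))) = 1 - a by field_simp; ring,
    mul_div_cancel_left₀ _ two_ne_zero] at h
  rw [← h, ← mul_assoc, ← Real.mul_rpow (by positivity) (by positivity),
    show (2 - a) / 2 * (1 / (2 - a)) = 1 / 2 by field_simp]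

lemma eq_zero_of_symm (hD : ProductRule α D) (hα0 : α ≠ 0) (hα1 : α ≠ 1)
    (hhalf : D (1 / 2) = 0) (hsymm : ∀ x ∈ Icc (0 : ℝ) 1, D (1 - x) = D x) :
    ∀ x ∈ Icc (0 : ℝ) 1, D x = 0 := by
  rintro a ⟨ha0, ha1⟩
  rcases ha0.eq_or_lt with rfl | ha0
  · exact hD.apply_zero hα0
  rcases ha1.eq_or_lt with rfl | ha1
  · exact hD.apply_one hα0
  have h1 := hD.apply_div_two_sub hhalf ha0 ha1.le
  have h2 := hD.apply_one_sub_div_two_sub hhalf ha0.le ha1.le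
  have h3 := hD.apply_one_sub hhalf ha0 ha1
  have h2a : 0 < 2 - a := by linarith
  set c := (1 - a) / (2 - a)
  have hc : a / (2 - a) = 1 - 2 * c := by simp only [c]; field_simp; ring
  have hc1 : 2 * c ≤ 1 := by simp only [c]; rw [mul_div_assoc', div_le_one h2a]; linarith
  rw [hc, hsymm (2 * c) ⟨by positivity, hc1⟩] at h1
  rw [hsymm a ⟨ha0.le, ha1.le⟩] at h3
  have key : (2 * (1 / 2 : ℝ) ^ α - 1) * D a = 0 := by linear_combination h3 + h1 - h2
  refine (mul_eq_zero.1 key).resolve_left fun h => half_rpow_ne_half_rpow hα1 ?_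
  rw [rpow_one]
  linarith

lemma apply_eq_two_mul_apply_half (hD : ProductRule α D) (hα0 : α ≠ 0)
    (hanti : ∀ x, D (1 - x) = -D x) : ∀ x ∈ Icc (0 : ℝ) 1, D x = 2 * D (x / 2) := by
  have hhalf := apply_half_eq_zero_of_antisymm hanti
  rintro a ⟨ha0, ha1⟩
  rcases ha0.eq_or_lt with rfl | ha0
  · simp [hD.apply_zero hα0]
  rcases ha1.eq_or_lt with rfl | ha1
  · rw [hD.apply_one hα0, hhalf, mul_zero]
  have h1 := hD.apply_div_two_sub hhalf ha0 ha1.le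
  have h2 := hD.apply_one_sub_div_two_sub hhalf ha0.le ha1.le
  have h3 := hD.apply_one_sub hhalf ha0 ha1
  have h2a : 0 < 2 - a := by linarith
  rw [show a / (2 - a) = 1 - 2 * ((1 - a) / (2 - a)) by field_simp; ring, hanti] at h1
  rw [hanti] at h3
  linear_combination h3 - h1 - h2

lemma eq_zero_of_antisymm (hD : ProductRule α D) (hα0 : α ≠ 0) (hα2 : α ≠ 2)
    (hanti : ∀ x, D (1 - x) = -D x) : ∀ x ∈ Icc (0 : ℝ) 1, D x = 0 := by
  have hhalf := apply_half_eq_zero_of_antisymm hanti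
  have hdouble := hD.apply_eq_two_mul_apply_half hα0 hanti
  rintro a ⟨ha0, ha1⟩
  rcases ha0.eq_or_lt with rfl | ha0
  · exact hD.apply_zero hα0
  rcases ha1.eq_or_lt with rfl | ha1
  · exact hD.apply_one hα0
  have h2 := hD.apply_one_sub_div_two_sub hhalf ha0.le ha1.le
  have h3 := hD.apply_one_sub hhalf ha0 ha1
  have h2a : 0 < 2 - a := by linarith
  have hc : 2 * ((1 - a) / (2 - a)) ∈ Icc (0 : ℝ) 1 :=
    ⟨by positivity, by rw [mul_div_assoc', div_le_one h2a]; linarith⟩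
  rw [hanti, hdouble _ hc, mul_div_cancel_left₀ _ two_ne_zero] at h3
  have key : (4 * (1 / 2 : ℝ) ^ α - 1) * D a = 0 := by
    linear_combination -2 * h3 - 2 * h2 - hdouble a ⟨ha0.le, ha1.le⟩
  refine (mul_eq_zero.1 key).resolve_left fun h => half_rpow_ne_half_rpow hα2 ?_
  norm_num
  linarith

end ProductRule

namespace FundamentalEquation

variable {α : ℝ} {u : ℝ → ℝ}

lemma skewPart_cross (hu : FundamentalEquation α u) {a t : ℝ} (ha0 : 0 < a) (ha1 : a < 1)
    (ht0 : 0 < t) (ht1 : t < 1) :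
    (1 - a) ^ α * skewPart u t + (1 - t) ^ α * skewPart u a =
      (1 - a * t) ^ α * (skewPart u (a * (1 - t) / (1 - a * t))
        + skewPart u (t * (1 - a) / (1 - a * t))) := by
  have hat : 0 < 1 - a * t := by nlinarith
  have hat' := hat.ne'
  have h := hu.skewPart_add (x := a * (1 - t) / (1 - a * t)) (y := t * (1 - a) / (1 - a * t))
    (by positivity) (by rw [div_lt_one hat]; nlinarith) (by positivity)
    (by rw [div_lt_one hat]; nlinarith) (by rw [← add_div, div_le_one hat]; nlinarith)
  have hw : 1 - a * (1 - t) / (1 - a * t) = (1 - a) / (1 - a * t) := by field_simp; ring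
  have hw' : 1 - t * (1 - a) / (1 - a * t) = (1 - t) / (1 - a * t) := by
    rw [eq_div_iff hat', sub_mul, div_mul_cancel₀ _ hat']; ring
  rw [hw, hw', div_div_div_cancel_right₀ hat', div_div_div_cancel_right₀ hat',
    mul_div_cancel_right₀ _ (by linarith : 1 - a ≠ 0),
    mul_div_cancel_right₀ _ (by linarith : 1 - t ≠ 0)] at h
  rw [← h, mul_add, ← mul_assoc, ← mul_assoc, rpow_mul_div_rpow α (by linarith) hat,
    rpow_mul_div_rpow α (by linarith) hat]

lemma skewPart_mul (hu : FundamentalEquation 2 u) {a t : ℝ} (ha : a ∈ Icc (0 : ℝ) 1)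
    (ht : t ∈ Icc (0 : ℝ) 1) : skewPart u (a * t) = a * skewPart u t + t * skewPart u a := by
  have hg := hu.productRule_skewPart
  have hg0 := hg.apply_zero two_ne_zero
  have hg1 := hg.apply_one two_ne_zero
  obtain ⟨ha0, ha1⟩ := ha
  obtain ⟨ht0, ht1⟩ := ht
  rcases ha0.eq_or_lt with rfl | ha0
  · simp [hg0]
  rcases ha1.eq_or_lt with rfl | ha1
  · simp [hg1]
  rcases ht0.eq_or_lt with rfl | ht0
  · simp [hg0]
  rcases ht1.eq_or_lt with rfl | ht1
  · simp [hg1]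
  have hat : a * t < 1 := by nlinarith
  have e1 := hg a t ha0 ha1.le ht0.le ht1.le hat
  have e2 := hg t a ht0 ht1.le ha0.le ha1.le (by linarith)
  have e3 := hu.skewPart_cross ha0 ha1 ht0 ht1
  rw [mul_comm t a] at e2
  simp only [rpow_two] at e1 e2 e3
  linear_combination (e1 + e2 + e3) / 2

end FundamentalEquation

lemma add_of_mul_of_antisymm {g : ℝ → ℝ}
    (hmul : ∀ a ∈ Icc (0 : ℝ) 1, ∀ t ∈ Icc (0 : ℝ) 1, g (a * t) = a * g t + t * g a)
    (hanti : ∀ x, g (1 - x) = -g x) (s t : ℝ) (hs : 0 ≤ s) (ht : 0 ≤ t) (hst : s + t ≤ 1) :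
    g (s + t) = g s + g t := by
  rcases (add_nonneg hs ht).eq_or_lt with h0 | h0
  · obtain ⟨rfl, rfl⟩ : s = 0 ∧ t = 0 := ⟨by linarith, by linarith⟩
    simpa using hmul 0 ⟨le_rfl, zero_le_one⟩ 0 ⟨le_rfl, zero_le_one⟩
  have hp : s / (s + t) ∈ Icc (0 : ℝ) 1 := ⟨by positivity, by rw [div_le_one h0]; linarith⟩
  have h1 := hmul (s + t) ⟨h0.le, hst⟩ _ hp
  have h2 := hmul (s + t) ⟨h0.le, hst⟩ (1 - s / (s + t)) ⟨by linarith [hp.2], by linarith [hp.1]⟩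
  rw [mul_div_cancel₀ _ h0.ne'] at h1
  rw [show (s + t) * (1 - s / (s + t)) = t by field_simp; ring, hanti] at h2
  linear_combination -h1 - h2

lemma apply_fract_add_of_add {g : ℝ → ℝ}
    (hadd : ∀ s t : ℝ, 0 ≤ s → 0 ≤ t → s + t ≤ 1 → g (s + t) = g s + g t) (hg1 : g 1 = 0)
    (a b : ℝ) : g (Int.fract (a + b)) = g (Int.fract a) + g (Int.fract b) := by
  obtain ⟨z, hz⟩ := Int.fract_add a b
  have hlo := Int.fract_add_fract_le a b
  have hhi := Int.fract_add_le a b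
  have hz' : z = 0 ∨ z = -1 := by
    have : (-1 : ℝ) ≤ z ∧ (z : ℝ) ≤ 0 := ⟨by linarith, by linarith⟩
    norm_cast at this
    omega
  have hab1 := Int.fract_lt_one (a + b)
  have ha1 := Int.fract_lt_one a
  have hb0 := Int.fract_nonneg b
  have hb1 := Int.fract_lt_one b
  rcases hz' with rfl | rfl <;> push_cast at hz
  · rw [show Int.fract (a + b) = Int.fract a + Int.fract b by linarith]
    exact hadd _ _ (Int.fract_nonneg a) hb0 (by linarith)
  · have h1 := hadd (1 - Int.fract b) (Int.fract b) (by linarith) hb0 (sub_add_cancel _ _).le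
    rw [sub_add_cancel, hg1] at h1
    rw [show Int.fract a = Int.fract (a + b) + (1 - Int.fract b) by linarith,
      hadd _ _ (Int.fract_nonneg _) (by linarith) (by linarith)]
    linarith

lemma eq_zero_of_measurable_of_add {g : ℝ → ℝ} (hmeas : Measurable fun x : Icc (0 : ℝ) 1 => g x)
    (hadd : ∀ s t : ℝ, 0 ≤ s → 0 ≤ t → s + t ≤ 1 → g (s + t) = g s + g t) (hg1 : g 1 = 0) :
    ∀ x ∈ Icc (0 : ℝ) 1, g x = 0 := by
  have hg0 : g 0 = 0 := by simpa using hadd 0 0 le_rfl le_rfl (by norm_num)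
  let G : ℝ →+ ℝ :=
    { toFun := fun x => g (Int.fract x)
      map_zero' := by simp [hg0]
      map_add' := apply_fract_add_of_add hadd hg1 }
  have hGmeas : Measurable G :=
    hmeas.comp (measurable_fract.subtype_mk (p := (· ∈ Icc (0 : ℝ) 1)) (h := fun x =>
      ⟨Int.fract_nonneg x, (Int.fract_lt_one x).le⟩))
  have hG (x : ℝ) : G x = 0 := by
    simpa [G, hg0] using
      map_real_smul G (MeasureTheory.Measure.AddMonoidHom.continuous_of_measurable G hGmeas) x 1
  rintro x ⟨hx0, hx1⟩
  rcases hx1.eq_or_lt with rfl | hx1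
  · exact hg1
  simpa [G, Int.fract_eq_self.2 ⟨hx0, hx1⟩] using hG x

lemma binaryTsallis_half_ne_zero {α : ℝ} (hα1 : α ≠ 1) : binaryTsallis α (1 / 2) ≠ 0 := by
  have h : 2 * (1 / 2 : ℝ) ^ α - 1 ≠ 0 := fun h =>
    half_rpow_ne_half_rpow hα1 (by rw [rpow_one]; linarith)
  have h' : 1 - α ≠ 0 := sub_ne_zero.2 hα1.symm
  rw [binaryTsallis, show (1 : ℝ) - 1 / 2 = 1 / 2 by norm_num, ← two_mul]
  exact mul_ne_zero (one_div_ne_zero h') h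

lemma FundamentalEquation.eq_const_mul_binaryTsallis {α : ℝ} {u : ℝ → ℝ}
    (hu : FundamentalEquation α u) (hα0 : α ≠ 0) (hα1 : α ≠ 1)
    (hsymm : ∀ x ∈ Icc (0 : ℝ) 1, u (1 - x) = u x) :
    ∃ c : ℝ, ∀ x ∈ Icc (0 : ℝ) 1, u x = c * binaryTsallis α x := by
  set c := u (1 / 2) / binaryTsallis α (1 / 2)
  have hD := (hu.sub_const_mul (fundamentalEquation_binaryTsallis α) c).productRule
  have hhalf : u (1 / 2) - c * binaryTsallis α (1 / 2) = 0 := by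
    rw [div_mul_cancel₀ _ (binaryTsallis_half_ne_zero hα1), sub_self]
  have hDsymm (x : ℝ) (hx : x ∈ Icc (0 : ℝ) 1) :
      u (1 - x) - c * binaryTsallis α (1 - x) = u x - c * binaryTsallis α x := by
    rw [hsymm x hx, binaryTsallis, binaryTsallis, sub_sub_cancel, add_comm (x ^ α)]
  exact ⟨c, fun x hx => sub_eq_zero.1 (hD.eq_zero_of_symm hα0 hα1 hhalf hDsymm x hx)⟩

/-- For `0 < α`, `α ≠ 1`, any Lebesgue-measurable `u : [0,1] → ℝ` satisfying the
fundamental functional equation is a multiple of `s_α(x) = (1/(1-α)) (x^α + (1-x)^α - 1)`. -/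
theorem stmt0 (α : ℝ) (hα : 0 < α) (hα1 : α ≠ 1) (u : ℝ → ℝ)
    (hmeas : Measurable fun x : Set.Icc (0 : ℝ) 1 => u x)
    (heq : ∀ x y : ℝ, 0 ≤ x → x < 1 → 0 ≤ y → y < 1 → x + y ≤ 1 →
      u (1 - x) + (1 - x) ^ α * u (y / (1 - x))
        = u y + (1 - y) ^ α * u ((1 - x - y) / (1 - y))) :
    ∃ lam : ℝ, ∀ x : ℝ, 0 ≤ x → x ≤ 1 →
      u x = lam * ((1 / (1 - α)) * (x ^ α + (1 - x) ^ α - 1)) := by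
  have hu : FundamentalEquation α u := heq
  have hskew : ∀ x ∈ Icc (0 : ℝ) 1, skewPart u x = 0 := by
    rcases eq_or_ne α 2 with rfl | hα2
    · exact eq_zero_of_measurable_of_add
        (hmeas.sub (hmeas.comp unitInterval.continuous_symm.measurable))
        (add_of_mul_of_antisymm (fun a ha t ht => hu.skewPart_mul ha ht) (skewPart_one_sub u))
        (hu.productRule_skewPart.apply_one two_ne_zero)
    · exact hu.productRule_skewPart.eq_zero_of_antisymm hα.ne' hα2 (skewPart_one_sub u)
  obtain ⟨c, hc⟩ := hu.eq_const_mul_binaryTsallis hα.ne' hα1 fun x hx =>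
    (sub_eq_zero.1 (hskew x hx)).symm
  exact ⟨c, fun x hx0 hx1 => hc x ⟨hx0, hx1⟩⟩
end

section
/- Let α > 0. Any Lebesgue-measurable function u : [0,1] → ℝ satisfying u(1-x) + (1-x)^α · u(y/(1-x)) = u(y) + (1-y)^α · u((1-x-y)/(1-y)) for all x, y ∈ [0,1) with x + y ≤ 1 is continuous on the open interval (0,1). -/
open MeasureTheory Set Filter Topology
open scoped ENNReal

/-!
Putting `x = 1 - t` in `(⋆)` gives, for `0 ≤ y ≤ t < 1`,
`u t = u y + (1 - y)^α u ((t - y)/(1 - y)) - t^α u (y / t)`,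
so `u t - u t₀` is a difference of two such right-hand sides with a common free parameter `y`.
By a weak form of Lusin's theorem, `u` is within `ε` of a continuous `v` on `[0,1]` off a set `E`
of small measure. The maps `y ↦ (s - y)/(1 - y)` and `y ↦ y / s` (for `s = t, t₀`) do not
shrink lengths by more than a fixed factor, so some `y ∈ [0, t₀/2]` sends all four arguments
outside `E`. For that `y` the difference `u t - u t₀` is within `4ε` of the same expression for
`v`, which is continuous in `t` uniformly in `y` by compactness.
-/

theorem ofReal_mul_volume_inter_preimage_le_of_le_abs_deriv {f f' : ℝ → ℝ} {S E : Set ℝ} {δ : ℝ}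
    (hf : Measurable f) (hS : MeasurableSet S) (hE : MeasurableSet E)
    (hderiv : ∀ x ∈ S, HasDerivWithinAt f (f' x) S x) (hinj : InjOn f S)
    (hδ : ∀ x ∈ S, δ ≤ |f' x|) :
    ENNReal.ofReal δ * volume (S ∩ f ⁻¹' E) ≤ volume E := by
  have hmeas : MeasurableSet (S ∩ f ⁻¹' E) := hS.inter (hf hE)
  calc ENNReal.ofReal δ * volume (S ∩ f ⁻¹' E)
      = ∫⁻ _ in S ∩ f ⁻¹' E, ENNReal.ofReal δ := (setLIntegral_const _ _).symm
    _ ≤ ∫⁻ x in S ∩ f ⁻¹' E, ENNReal.ofReal |f' x| :=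
        setLIntegral_mono' hmeas fun x hx => ENNReal.ofReal_le_ofReal (hδ x hx.1)
    _ ≤ volume (f '' (S ∩ f ⁻¹' E)) := by
        simpa only [ContinuousLinearMap.det_toSpanSingleton] using
          lintegral_abs_det_fderiv_le_addHaar_image volume hmeas
            (fun x hx => ((hderiv x hx.1).mono inter_subset_left).hasFDerivWithinAt)
            (hinj.mono inter_subset_left)
    _ ≤ volume E := measure_mono (image_subset_iff.2 inter_subset_right)

theorem ofReal_one_sub_mul_volume_inter_preimage_le {s : ℝ} (hs : s < 1) {E : Set ℝ}
    (hE : MeasurableSet E) :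
    ENNReal.ofReal (1 - s) * volume (Ico 0 1 ∩ (fun y => (s - y) / (1 - y)) ⁻¹' E)
      ≤ volume E := by
  refine ofReal_mul_volume_inter_preimage_le_of_le_abs_deriv (f' := fun y => (s - 1) / (1 - y) ^ 2)
    (by fun_prop) measurableSet_Ico hE (fun y hy => ?_) (fun y₁ hy₁ y₂ hy₂ h => ?_)
    (fun y hy => ?_)
  · have hy1 : 1 - y ≠ 0 := by linarith [hy.2]
    refine (((hasDerivAt_id y).const_sub s).div ((hasDerivAt_id y).const_sub 1) hy1
      |>.congr_deriv (by simp only [id]; ring)).hasDerivWithinAt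
  · have hy₁1 : 1 - y₁ ≠ 0 := by linarith [hy₁.2]
    have hy₂1 : 1 - y₂ ≠ 0 := by linarith [hy₂.2]
    rw [div_eq_div_iff hy₁1 hy₂1] at h
    exact mul_left_cancel₀ (sub_ne_zero.2 hs.ne') (by linear_combination -h)
  · have hpos : 0 < (1 - y) ^ 2 := by nlinarith [hy.2]
    rw [abs_div, abs_of_nonpos (by linarith), abs_of_pos hpos, le_div_iff₀ hpos]
    have hsq : (1 - y) ^ 2 ≤ 1 := by nlinarith [hy.1, hy.2]
    nlinarith [mul_le_mul_of_nonneg_left hsq (sub_nonneg.2 hs.le)]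

theorem volume_preimage_div_le {s : ℝ} (hs₀ : 0 < s) (hs₁ : s ≤ 1) (E : Set ℝ) :
    volume ((fun y => y / s) ⁻¹' E) ≤ volume E := by
  simp only [div_eq_mul_inv]
  rw [Real.volume_preimage_mul_right (inv_ne_zero hs₀.ne'), inv_inv, abs_of_pos hs₀]
  exact mul_le_of_le_one_left' (ENNReal.ofReal_le_one.2 hs₁)

theorem exists_mem_Icc_forall_notMem {t₀ t : ℝ} (ht₀ : t₀ ∈ Ioo 0 1)
    (ht : t ∈ Ioo (t₀ / 2) ((1 + t₀) / 2)) {E : Set ℝ} (hE : MeasurableSet E)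
    (hEv : volume E < ENNReal.ofReal (t₀ * (1 - t₀) / 16)) :
    ∃ y ∈ Icc 0 (t₀ / 2), ∀ s ∈ ({t, t₀} : Set ℝ), (s - y) / (1 - y) ∉ E ∧ y / s ∉ E := by
  obtain ⟨h₀, h₁⟩ := ht₀
  set J := Icc 0 (t₀ / 2)
  let bad (s : ℝ) := J ∩ ((fun y => (s - y) / (1 - y)) ⁻¹' E ∪ (fun y => y / s) ⁻¹' E)
  have hbad : ∀ s ∈ ({t, t₀} : Set ℝ),
      ENNReal.ofReal ((1 - t₀) / 2) * volume (bad s) ≤ 2 * volume E := by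
    intro s hs
    obtain ⟨hs₀, hs₁⟩ : 0 < s ∧ (1 - t₀) / 2 ≤ 1 - s := by
      rcases hs with rfl | rfl
      exacts [⟨by linarith [ht.1], by linarith [ht.2]⟩, ⟨h₀, by linarith⟩]
    have hJ : J ⊆ Ico 0 1 := Icc_subset_Ico_right (by linarith)
    calc ENNReal.ofReal ((1 - t₀) / 2) * volume (bad s)
        ≤ ENNReal.ofReal ((1 - t₀) / 2) *
            (volume (Ico 0 1 ∩ (fun y => (s - y) / (1 - y)) ⁻¹' E)
              + volume ((fun y => y / s) ⁻¹' E)) := by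
          gcongr
          refine (measure_mono ?_).trans (measure_union_le _ _)
          rintro y ⟨hyJ, hy | hy⟩
          exacts [Or.inl ⟨hJ hyJ, hy⟩, Or.inr hy]
      _ ≤ volume E + volume E := by
          rw [mul_add]
          gcongr
          · exact (mul_le_mul_left (ENNReal.ofReal_le_ofReal hs₁) _).trans
              (ofReal_one_sub_mul_volume_inter_preimage_le (by linarith) hE)
          · exact (mul_le_of_le_one_left' (ENNReal.ofReal_le_one.2 (by linarith))).trans
              (volume_preimage_div_le hs₀ (by linarith) E)
      _ = 2 * volume E := (two_mul _).symm
  have hlt : volume (bad t ∪ bad t₀) < volume J := by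
    have hc : ENNReal.ofReal ((1 - t₀) / 2) ≠ 0 := by simpa using h₁
    refine (ENNReal.mul_lt_mul_iff_right hc ENNReal.ofReal_ne_top).1 ?_
    calc ENNReal.ofReal ((1 - t₀) / 2) * volume (bad t ∪ bad t₀)
        ≤ ENNReal.ofReal ((1 - t₀) / 2) * volume (bad t)
            + ENNReal.ofReal ((1 - t₀) / 2) * volume (bad t₀) := by
          rw [← mul_add]; gcongr; exact measure_union_le _ _
      _ ≤ 2 * volume E + 2 * volume E := add_le_add (hbad t (by simp)) (hbad t₀ (by simp))
      _ < 2 * ENNReal.ofReal (t₀ * (1 - t₀) / 16) + 2 * ENNReal.ofReal (t₀ * (1 - t₀) / 16) :=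
          by gcongr <;> simp
      _ = ENNReal.ofReal ((1 - t₀) / 2) * volume J := by
          rw [Real.volume_Icc, ← ENNReal.ofReal_mul (by linarith), ← two_mul, ← mul_assoc,
            show (2 : ℝ≥0∞) * 2 = ENNReal.ofReal 4 by norm_num, ← ENNReal.ofReal_mul (by norm_num)]
          congr 1
          ring
  obtain ⟨y, hyJ, hy⟩ := not_subset.1 fun h => (measure_mono h).not_gt hlt
  refine ⟨y, hyJ, fun s hs => ?_⟩
  have hys : y ∉ bad s := by
    rcases hs with rfl | rfl
    exacts [fun h => hy (Or.inl h), fun h => hy (Or.inr h)]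
  exact ⟨fun h => hys ⟨hyJ, Or.inl h⟩, fun h => hys ⟨hyJ, Or.inr h⟩⟩

section Approximation

variable {X : Type*} [MeasurableSpace X] {μ : Measure X} {f : X → ℝ} {s : Set X}

theorem Measurable.exists_measure_inter_lt_abs_lt (hf : Measurable f) (hsm : MeasurableSet s)
    (hs : μ s ≠ ∞) {η : ℝ≥0∞} (hη : η ≠ 0) : ∃ M : ℝ, μ (s ∩ {x | M < |f x|}) < η := by
  have hanti : Antitone fun M : ℝ => s ∩ {x | M < |f x|} :=
    fun M N hMN x hx => ⟨hx.1, hMN.trans_lt hx.2⟩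
  have hempty : ⋂ M : ℝ, s ∩ {x | M < |f x|} = ∅ :=
    eq_empty_of_forall_notMem fun x hx => lt_irrefl |f x| (mem_iInter.1 hx |f x|).2
  have htends := tendsto_measure_iInter_atTop (μ := μ)
    (fun M => (hsm.inter (measurableSet_lt measurable_const hf.abs)).nullMeasurableSet) hanti
    ⟨0, measure_ne_top_of_subset inter_subset_left hs⟩
  rw [hempty, measure_empty] at htends
  exact (htends.eventually_lt_const (pos_iff_ne_zero.2 hη)).exists

variable [TopologicalSpace X] [NormalSpace X] [BorelSpace X] [μ.WeaklyRegular]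

theorem Measurable.exists_continuous_abs_sub_le_off (hf : Measurable f) (hsm : MeasurableSet s)
    (hs : μ s ≠ ∞) {ε : ℝ} (hε : 0 < ε) {η : ℝ≥0∞} (hη : η ≠ 0) :
    ∃ v : X → ℝ, Continuous v ∧
      ∃ E, MeasurableSet E ∧ μ E ≤ η ∧ ∀ x ∈ s, x ∉ E → |f x - v x| ≤ ε := by
  obtain ⟨M, hM⟩ := hf.exists_measure_inter_lt_abs_lt hsm hs (ENNReal.half_pos hη).ne'
  set T := s ∩ {x | |f x| ≤ M}
  have hTm : MeasurableSet T := hsm.inter (measurableSet_le hf.abs measurable_const)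
  have hg : Integrable (T.indicator f) μ :=
    (integrable_indicator_iff hTm).2 <|
      Measure.integrableOn_of_bounded (measure_ne_top_of_subset inter_subset_left hs)
        hf.aestronglyMeasurable (M := M) ((ae_restrict_iff' hTm).2 (ae_of_all _ fun x hx => hx.2))
  obtain ⟨v, hv, -⟩ := hg.exists_boundedContinuous_lintegral_sub_le
    (mul_ne_zero (ENNReal.ofReal_pos.2 hε).ne' (ENNReal.half_pos hη).ne')
  have hvm : Measurable fun x => T.indicator f x - v x :=
    (hf.indicator hTm).sub v.continuous.measurable
  set D := {x | ENNReal.ofReal ε ≤ ‖T.indicator f x - v x‖ₑ}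
  refine ⟨v, v.continuous, D ∪ (s ∩ {x | M < |f x|}),
    (measurableSet_le measurable_const hvm.enorm).union
      (hsm.inter (measurableSet_lt measurable_const hf.abs)), ?_, fun x hxs hxE => ?_⟩
  · calc μ (D ∪ (s ∩ {x | M < |f x|})) ≤ η / 2 + η / 2 := by
          refine (measure_union_le _ _).trans (add_le_add ?_ hM.le)
          exact (meas_ge_le_lintegral_div hvm.enorm.aemeasurable
            (ENNReal.ofReal_pos.2 hε).ne' ENNReal.ofReal_ne_top).trans
            (ENNReal.div_le_of_le_mul (hv.trans_eq (mul_comm _ _)))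
      _ = η := ENNReal.add_halves η
  · have hxT : x ∈ T := ⟨hxs, show |f x| ≤ M from not_lt.1 fun h => hxE (Or.inr ⟨hxs, h⟩)⟩
    have hlt : ‖T.indicator f x - v x‖ₑ < ENNReal.ofReal ε := not_le.1 fun h => hxE (Or.inl h)
    rw [indicator_of_mem hxT, Real.enorm_eq_ofReal_abs, ENNReal.ofReal_lt_ofReal_iff hε] at hlt
    exact hlt.le

end Approximation

/-- `(⋆)` with `x = 1 - t` reads `f t = f y + fundamentalTerm α f t y` for `0 ≤ y ≤ t < 1`. -/
noncomputable def fundamentalTerm (α : ℝ) (f : ℝ → ℝ) (t y : ℝ) : ℝ :=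
  (1 - y) ^ α * f ((t - y) / (1 - y)) - t ^ α * f (y / t)

theorem continuousOn_fundamentalTerm {α : ℝ} {v : ℝ → ℝ} (hv : Continuous v) :
    ContinuousOn (Function.uncurry (fundamentalTerm α v)) (Ioi 0 ×ˢ Iio 1) := by
  rintro ⟨t, y⟩ ⟨ht, hy⟩
  have ht : t ≠ 0 := (mem_Ioi.1 ht).ne'
  have hy : 1 - y ≠ 0 := (sub_pos.2 (mem_Iio.1 hy)).ne'
  refine ContinuousAt.continuousWithinAt (ContinuousAt.sub ?_ ?_)
  · exact ((continuousAt_const.sub continuousAt_snd).rpow_const (Or.inl hy)).mul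
      (hv.continuousAt.comp ((continuousAt_fst.sub continuousAt_snd).div
        (continuousAt_const.sub continuousAt_snd) hy))
  · exact (continuousAt_fst.rpow_const (Or.inl ht)).mul
      (hv.continuousAt.comp (continuousAt_snd.div continuousAt_fst ht))

theorem sub_div_one_sub_mem_Icc_and_div_mem_Icc {t y : ℝ} (ht₀ : 0 < t) (ht₁ : t < 1)
    (hy : 0 ≤ y) (hyt : y ≤ t) : (t - y) / (1 - y) ∈ Icc 0 1 ∧ y / t ∈ Icc 0 1 :=
  ⟨unitInterval.div_mem (by linarith) (by linarith) (by linarith),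
    unitInterval.div_mem hy ht₀.le hyt⟩

theorem dist_fundamentalTerm_le {α : ℝ} (hα : 0 ≤ α) {f g : ℝ → ℝ} {E : Set ℝ} {ε : ℝ}
    (hfg : ∀ x ∈ Icc 0 1, x ∉ E → |f x - g x| ≤ ε) {t y : ℝ} (ht₀ : 0 < t) (ht₁ : t < 1)
    (hy : 0 ≤ y) (hyt : y ≤ t) (h₁ : (t - y) / (1 - y) ∉ E) (h₂ : y / t ∉ E) :
    dist (fundamentalTerm α f t y) (fundamentalTerm α g t y) ≤ 2 * ε := by
  obtain ⟨hφ, hψ⟩ := sub_div_one_sub_mem_Icc_and_div_mem_Icc ht₀ ht₁ hy hyt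
  have hweight : ∀ {a b : ℝ}, a ∈ Icc 0 1 → |b| ≤ ε → |a ^ α * b| ≤ ε := fun ha hb => by
    rw [abs_mul, abs_of_nonneg (Real.rpow_nonneg ha.1 α)]
    exact (mul_le_of_le_one_left (abs_nonneg _) (Real.rpow_le_one ha.1 ha.2 hα)).trans hb
  calc dist (fundamentalTerm α f t y) (fundamentalTerm α g t y)
      = |(1 - y) ^ α * (f ((t - y) / (1 - y)) - g ((t - y) / (1 - y)))
          - t ^ α * (f (y / t) - g (y / t))| := by
        rw [Real.dist_eq, fundamentalTerm, fundamentalTerm]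
        congr 1; ring
    _ ≤ ε + ε := (abs_sub _ _).trans <|
        add_le_add (hweight ⟨by linarith, by linarith⟩ (hfg _ hφ h₁))
          (hweight ⟨ht₀.le, ht₁.le⟩ (hfg _ hψ h₂))
    _ = 2 * ε := (two_mul ε).symm

theorem eventually_forall_dist_fundamentalTerm_lt {α : ℝ} {v : ℝ → ℝ} (hv : Continuous v)
    {t₀ b ε : ℝ} (ht₀ : 0 < t₀) (hb : b < 1) (hε : 0 < ε) :
    ∀ᶠ t in 𝓝 t₀, ∀ y ∈ Icc 0 b,
      dist (fundamentalTerm α v t y) (fundamentalTerm α v t₀ y) < ε := by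
  by_cases hb₀ : 0 ≤ b
  · obtain ⟨V, hV, hVε⟩ := isCompact_Icc.mem_uniformity_of_prod
      ((continuousOn_fundamentalTerm hv).mono
        (prod_mono subset_rfl ((Icc_subset_Iio_iff hb₀).2 hb)))
      (mem_Ioi.2 ht₀) (Metric.dist_mem_uniformity hε)
    rw [isOpen_Ioi.nhdsWithin_eq (mem_Ioi.2 ht₀)] at hV
    exact mem_of_superset hV hVε
  · simp [Icc_eq_empty hb₀]

theorem continuousAt_of_eq_add_fundamentalTerm {α : ℝ} (hα : 0 ≤ α) {f : ℝ → ℝ}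
    (hf : Measurable f)
    (hfe : ∀ t y, 0 < t → t < 1 → 0 ≤ y → y ≤ t → f t = f y + fundamentalTerm α f t y)
    {t₀ : ℝ} (ht₀ : t₀ ∈ Ioo 0 1) : ContinuousAt f t₀ := by
  obtain ⟨h₀, h₁⟩ := ht₀
  rw [Metric.continuousAt_iff']
  intro ε hε
  obtain ⟨v, hv, E, hEm, hEv, hfv⟩ := hf.exists_continuous_abs_sub_le_off measurableSet_Icc
    (measure_Icc_lt_top (μ := volume) (a := 0) (b := 1)).ne (ε := ε / 5) (by positivity)
    (η := ENNReal.ofReal (t₀ * (1 - t₀) / 32)) (ENNReal.ofReal_pos.2 (by nlinarith)).ne'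
  have hEv' : volume E < ENNReal.ofReal (t₀ * (1 - t₀) / 16) :=
    hEv.trans_lt ((ENNReal.ofReal_lt_ofReal_iff (by nlinarith)).2 (by nlinarith))
  filter_upwards [eventually_forall_dist_fundamentalTerm_lt (α := α) hv h₀
      (show t₀ / 2 < 1 by linarith) (show 0 < ε / 5 by positivity),
    Ioo_mem_nhds (show t₀ / 2 < t₀ by linarith) (show t₀ < (1 + t₀) / 2 by linarith)]
    with t hvt ht
  obtain ⟨y, hy, hgood⟩ := exists_mem_Icc_forall_notMem ⟨h₀, h₁⟩ ht hEm hEv'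
  have ht₀ : 0 < t := by linarith [ht.1]
  have ht₁ : t < 1 := by linarith [ht.2]
  have hyt : y ≤ t := by linarith [hy.2, ht.1]
  have hyt₀ : y ≤ t₀ := by linarith [hy.2]
  have hdiff : f t - f t₀ = fundamentalTerm α f t y - fundamentalTerm α f t₀ y := by
    rw [hfe t y ht₀ ht₁ hy.1 hyt, hfe t₀ y h₀ h₁ hy.1 hyt₀]
    ring
  rw [dist_eq_norm, hdiff, ← dist_eq_norm]
  calc dist (fundamentalTerm α f t y) (fundamentalTerm α f t₀ y)
      ≤ dist (fundamentalTerm α f t y) (fundamentalTerm α v t y)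
        + dist (fundamentalTerm α v t y) (fundamentalTerm α v t₀ y)
        + dist (fundamentalTerm α f t₀ y) (fundamentalTerm α v t₀ y) := by
        rw [dist_comm (fundamentalTerm α f t₀ y)]; exact dist_triangle4 _ _ _ _
    _ < 2 * (ε / 5) + ε / 5 + 2 * (ε / 5) := by
        have hf_t := dist_fundamentalTerm_le hα hfv ht₀ ht₁ hy.1 hyt
          (hgood t (by simp)).1 (hgood t (by simp)).2
        have hf_t₀ := dist_fundamentalTerm_le hα hfv h₀ h₁ hy.1 hyt₀
          (hgood t₀ (by simp)).1 (hgood t₀ (by simp)).2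
        linarith [hvt y hy]
    _ = ε := by ring

/-- For `α > 0`, any Lebesgue-measurable solution `u : [0,1] → ℝ` of the fundamental
functional equation is continuous on `(0,1)`. -/
theorem stmt3 (α : ℝ) (hα : 0 < α) (u : ℝ → ℝ)
    (hmeas : Measurable fun x : Set.Icc (0 : ℝ) 1 => u x)
    (heq : ∀ x y : ℝ, 0 ≤ x → x < 1 → 0 ≤ y → y < 1 → x + y ≤ 1 →
      u (1 - x) + (1 - x) ^ α * u (y / (1 - x))
        = u y + (1 - y) ^ α * u ((1 - x - y) / (1 - y))) :
    ContinuousOn u (Set.Ioo 0 1) := by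
  set w : ℝ → ℝ := fun x => u (projIcc 0 1 zero_le_one x)
  have hwu : EqOn w u (Icc 0 1) := fun x hx => by simp [w, projIcc_of_mem _ hx]
  have hwe : ∀ t y, 0 < t → t < 1 → 0 ≤ y → y ≤ t → w t = w y + fundamentalTerm α w t y := by
    intro t y ht₀ ht₁ hy₀ hyt
    have h := heq (1 - t) y (by linarith) (by linarith) hy₀ (by linarith) (by linarith)
    rw [sub_sub_cancel] at h
    obtain ⟨hφ, hψ⟩ := sub_div_one_sub_mem_Icc_and_div_mem_Icc ht₀ ht₁ hy₀ hyt
    rw [fundamentalTerm, hwu ⟨ht₀.le, ht₁.le⟩, hwu ⟨hy₀, by linarith⟩, hwu hφ, hwu hψ]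
    linarith
  intro t ht
  exact (continuousAt_of_eq_add_fundamentalTerm hα.le
    (hmeas.comp continuous_projIcc.measurable) hwe ht
    |>.congr (hwu.eventuallyEq_of_mem (Icc_mem_nhds ht.1 ht.2))).continuousWithinAt
end

section
/- Let α > 0 and let h : ℝ → ℝ satisfy: (i) h(x+1) = h(x) for all x ∈ ℝ; (ii) h(x) = −h(1−x) for all x ∈ [0,1]; (iii) h(z) = z^α · h(2 − 1/z) for all z ∈ [1/2, 1]. Then for every nonzero x ∈ ℝ: h(x) = |x|^α · h((2x−1)/x) and h(x) = −|x|^α · h((1−x)/x); moreover h(0) = 0. -/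
/-!
Periodicity and anti-symmetry make `h` odd, so `h (k - x) = -h x` for every integer `k`. The
functional equation, combined with anti-symmetry, then gives the inversion law
`h x = -x ^ α * h x⁻¹` for `0 < x ≤ 1`: it holds directly on `[1/2, 1]`, and for `x < 1/2` it
transfers from `x / (1 - x)`, whose inverse is `x⁻¹ - 1`. This is the subtractive Euclidean
algorithm on `x⁻¹`, so it terminates after `⌈x⁻¹⌉` steps. Inverting extends the law to `x > 1`,
oddness to `x < 0`, and both identities of the theorem are rewritings of it, since
`(2x - 1)/x = 2 - x⁻¹` and `(1 - x)/x = x⁻¹ - 1`.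
-/

open Function

section Antisymm

variable {h : ℝ → ℝ} (hper : Periodic h 1) (hanti : ∀ x : ℝ, 0 ≤ x → x ≤ 1 → h x = -h (1 - x))
include hper hanti

theorem map_zero_of_periodic_of_antisymm : h 0 = 0 := by
  have h01 := hanti 0 le_rfl zero_le_one
  rw [sub_zero, hper.eq] at h01
  linarith

theorem map_neg_of_periodic_of_antisymm (x : ℝ) : h (-x) = -h x := by
  have hfract : h (Int.fract x) = h x := by
    rw [← Int.self_sub_floor, ← mul_one (⌊x⌋ : ℝ)]
    exact hper.sub_int_mul_eq ⌊x⌋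
  have hneg : h (1 - Int.fract x) = h (-x) := by
    have harg : 1 - Int.fract x - ((⌊x⌋ + 1 : ℤ) : ℝ) * 1 = -x := by
      rw [← Int.self_sub_floor]; push_cast; ring
    rw [← harg, hper.sub_int_mul_eq]
  rw [← hfract, ← hneg, hanti _ (Int.fract_nonneg x) (Int.fract_lt_one x).le, neg_neg]

theorem map_intCast_sub_of_periodic_of_antisymm (k : ℤ) (x : ℝ) : h (k - x) = -h x := by
  simpa using (hper.int_mul_sub_eq k (x := x)).trans (map_neg_of_periodic_of_antisymm hper hanti x)

end Antisymm

section Inversion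

variable {α : ℝ} {h : ℝ → ℝ} (hper : Periodic h 1)
  (hanti : ∀ x : ℝ, 0 ≤ x → x ≤ 1 → h x = -h (1 - x))
  (hfe : ∀ z : ℝ, 1 / 2 ≤ z → z ≤ 1 → h z = z ^ α * h (2 - 1 / z))
include hper hanti hfe

theorem map_eq_neg_rpow_mul_map_inv_of_one_half_le {x : ℝ} (hx : 1 / 2 ≤ x) (hx1 : x ≤ 1) :
    h x = -x ^ α * h x⁻¹ := by
  have h2 := map_intCast_sub_of_periodic_of_antisymm hper hanti 2 x⁻¹
  push_cast at h2
  rw [hfe x hx hx1, one_div, h2]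
  ring

theorem map_eq_neg_rpow_mul_map_inv_of_lt_one_half {x : ℝ} (hx : 0 < x) (hx2 : x < 1 / 2)
    (hy : h (x / (1 - x)) = -(x / (1 - x)) ^ α * h (x / (1 - x))⁻¹) :
    h x = -x ^ α * h x⁻¹ := by
  have hpos : 0 < 1 - x := by linarith
  have hinv : (x / (1 - x))⁻¹ = x⁻¹ - 1 := by field_simp
  have hfe' : 2 - 1 / (1 - x) = 1 - x / (1 - x) := by field_simp; ring
  have hsub := map_intCast_sub_of_periodic_of_antisymm hper hanti 1 (x / (1 - x))
  have hpow : (1 - x) ^ α * (x / (1 - x)) ^ α = x ^ α := by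
    rw [← Real.mul_rpow hpos.le (div_pos hx hpos).le, mul_div_cancel₀ x hpos.ne']
  push_cast at hsub
  rw [hinv, hper.sub_eq] at hy
  rw [hanti x hx.le (by linarith), hfe (1 - x) (by linarith) (by linarith), hfe', hsub, hy,
    ← hpow]
  ring

theorem map_eq_neg_rpow_mul_map_inv_of_le_one {x : ℝ} (hx : 0 < x) (hx1 : x ≤ 1) :
    h x = -x ^ α * h x⁻¹ := by
  obtain ⟨n, hn⟩ : ∃ n : ℕ, x⁻¹ ≤ n := ⟨_, Nat.le_ceil _⟩
  induction n generalizing x with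
  | zero => exact absurd hn (by simpa using hx)
  | succ n ih =>
    rcases le_or_gt (1 / 2) x with hx2 | hx2
    · exact map_eq_neg_rpow_mul_map_inv_of_one_half_le hper hanti hfe hx2 hx1
    · have hpos : 0 < 1 - x := by linarith
      refine map_eq_neg_rpow_mul_map_inv_of_lt_one_half hper hanti hfe hx hx2
        (ih (div_pos hx hpos) ((div_le_one hpos).2 (by linarith)) ?_)
      have hinv : (x / (1 - x))⁻¹ = x⁻¹ - 1 := by field_simp
      push_cast at hn
      linarith

theorem map_eq_neg_rpow_mul_map_inv_of_pos {x : ℝ} (hx : 0 < x) : h x = -x ^ α * h x⁻¹ := by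
  rcases le_or_gt x 1 with hx1 | hx1
  · exact map_eq_neg_rpow_mul_map_inv_of_le_one hper hanti hfe hx hx1
  · have hinv := map_eq_neg_rpow_mul_map_inv_of_le_one hper hanti hfe (inv_pos.2 hx)
      (inv_le_one_of_one_le₀ hx1.le)
    rw [inv_inv] at hinv
    rw [hinv, Real.inv_rpow hx.le]
    field_simp [(Real.rpow_pos_of_pos hx α).ne']

theorem map_eq_neg_abs_rpow_mul_map_inv {x : ℝ} (hx : x ≠ 0) : h x = -|x| ^ α * h x⁻¹ := by
  rcases hx.lt_or_gt with hneg | hpos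
  · have hodd := map_neg_of_periodic_of_antisymm hper hanti
    have hrel := map_eq_neg_rpow_mul_map_inv_of_pos hper hanti hfe (neg_pos.2 hneg)
    rw [hodd, inv_neg, hodd] at hrel
    rw [abs_of_neg hneg]
    linarith
  · rw [abs_of_pos hpos]
    exact map_eq_neg_rpow_mul_map_inv_of_pos hper hanti hfe hpos

end Inversion

theorem stmt8_general (α : ℝ) (h : ℝ → ℝ)
    (hper : ∀ x : ℝ, h (x + 1) = h x)
    (hanti : ∀ x : ℝ, 0 ≤ x → x ≤ 1 → h x = -h (1 - x))
    (hfe : ∀ z : ℝ, 1 / 2 ≤ z → z ≤ 1 → h z = z ^ α * h (2 - 1 / z)) :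
    (∀ x : ℝ, x ≠ 0 →
      h x = |x| ^ α * h ((2 * x - 1) / x) ∧ h x = -(|x| ^ α) * h ((1 - x) / x)) ∧
    h 0 = 0 := by
  have hper : Periodic h 1 := hper
  refine ⟨fun x hx => ?_, map_zero_of_periodic_of_antisymm hper hanti⟩
  have hrel := map_eq_neg_abs_rpow_mul_map_inv hper hanti hfe hx
  have h2 := map_intCast_sub_of_periodic_of_antisymm hper hanti 2 x⁻¹
  push_cast at h2
  have harg₁ : (2 * x - 1) / x = 2 - x⁻¹ := by field_simp
  have harg₂ : (1 - x) / x = x⁻¹ - 1 := by field_simp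
  rw [harg₁, harg₂, h2, hper.sub_eq]
  constructor <;> linarith

/-- If `h : ℝ → ℝ` is 1-periodic, anti-symmetric around `1/2` on `[0,1]`, and
satisfies `h(z) = z^α h(2 - 1/z)` on `[1/2,1]`, then for every nonzero `x`,
`h(x) = |x|^α h((2x-1)/x)` and `h(x) = -|x|^α h((1-x)/x)`; moreover `h(0) = 0`. -/
theorem stmt8 (α : ℝ) (hα : 0 < α) (h : ℝ → ℝ)
    (hper : ∀ x : ℝ, h (x + 1) = h x)
    (hanti : ∀ x : ℝ, 0 ≤ x → x ≤ 1 → h x = -h (1 - x))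
    (hfe : ∀ z : ℝ, 1 / 2 ≤ z → z ≤ 1 → h z = z ^ α * h (2 - 1 / z)) :
    (∀ x : ℝ, x ≠ 0 →
      h x = |x| ^ α * h ((2 * x - 1) / x) ∧ h x = -(|x| ^ α) * h ((1 - x) / x)) ∧
    h 0 = 0 :=
  stmt8_general α h hper hanti hfe
end

section
/- Let α > 0 and let h : ℝ → ℝ satisfy: (i) h(x+1) = h(x) for all x ∈ ℝ; (ii) h(x) = −h(1−x) for all x ∈ [0,1]; (iii) h(z) = z^α · h(2 − 1/z) for all z ∈ [1/2, 1]. Then h(x) = x^α · h(2 − 1/x) for all x ∈ [2, ∞). -/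
/-!
Writing `t = 1/x`, antisymmetry and the functional equation at `1 - t` give
`x^α h(1/x) = (x-1)^α h(1/(x-1))` for `x ≥ 2`. Iterating this shifts `x` down into `[2, 3]`,
where the functional equation at `1/(x-1) ∈ [1/2, 1]` together with periodicity gives
`(x-1)^α h(1/(x-1)) = -h(x)`. Hence `x^α h(1/x) = -h(x)` on `[2, ∞)`, and
`h(2 - 1/x) = h(1 - 1/x) = -h(1/x)` turns this into the claim.
-/

open Real

lemma apply_one_sub_of_antisymm {h : ℝ → ℝ}
    (hanti : ∀ x : ℝ, 0 ≤ x → x ≤ 1 → h x = -h (1 - x)) {y : ℝ} (hy₀ : 0 ≤ y) (hy₁ : y ≤ 1) :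
    h (1 - y) = -h y := by
  rw [hanti (1 - y) (by linarith) (by linarith), sub_sub_cancel]

lemma rpow_mul_apply_one_div_eq_sub_one {α : ℝ} {h : ℝ → ℝ}
    (hanti : ∀ x : ℝ, 0 ≤ x → x ≤ 1 → h x = -h (1 - x))
    (hfe : ∀ z : ℝ, 1 / 2 ≤ z → z ≤ 1 → h z = z ^ α * h (2 - 1 / z)) {x : ℝ} (hx : 2 ≤ x) :
    x ^ α * h (1 / x) = (x - 1) ^ α * h (1 / (x - 1)) := by
  have hx₀ : 0 < x := by linarith
  have hx₁ : 0 < x - 1 := by linarith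
  have h_inv_le : 1 / x ≤ 1 / 2 := one_div_le_one_div_of_le two_pos hx
  have h_inv_pos : 0 < 1 / x := by positivity
  have h_arg : 2 - 1 / (1 - 1 / x) = 1 - 1 / (x - 1) := by field_simp; ring
  have h_inv_sub_le : 1 / (x - 1) ≤ 1 := by rw [div_le_one hx₁]; linarith
  have h_fe : h (1 - 1 / x) = (1 - 1 / x) ^ α * -h (1 / (x - 1)) := by
    rw [hfe _ (by linarith) (by linarith), h_arg,
      apply_one_sub_of_antisymm hanti (by positivity) h_inv_sub_le]
  have h_pow : x ^ α * (1 - 1 / x) ^ α = (x - 1) ^ α := by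
    rw [← mul_rpow hx₀.le (by linarith)]
    congr 1
    field_simp
  rw [hanti _ h_inv_pos.le (by linarith), h_fe, ← h_pow]
  ring

lemma sub_one_rpow_mul_apply_one_div_sub_one {α : ℝ} {h : ℝ → ℝ} (hper : Function.Periodic h 1)
    (hanti : ∀ x : ℝ, 0 ≤ x → x ≤ 1 → h x = -h (1 - x))
    (hfe : ∀ z : ℝ, 1 / 2 ≤ z → z ≤ 1 → h z = z ^ α * h (2 - 1 / z))
    {x : ℝ} (hx₂ : 2 ≤ x) (hx₃ : x ≤ 3) :
    (x - 1) ^ α * h (1 / (x - 1)) = -h x := by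
  have hx₁ : 0 < x - 1 := by linarith
  have h_lo : 1 / 2 ≤ 1 / (x - 1) := one_div_le_one_div_of_le hx₁ (by linarith)
  have h_hi : 1 / (x - 1) ≤ 1 := by rw [div_le_one hx₁]; linarith
  have h_arg : 2 - 1 / (1 / (x - 1)) = 1 - (x - 2) := by rw [one_div_one_div]; ring
  have h_shift : h (x - 2) = h x := by
    rw [show x - 2 = x - 1 - 1 by ring, hper.sub_eq, hper.sub_eq]
  rw [hfe _ h_lo h_hi, h_arg, apply_one_sub_of_antisymm hanti (by linarith) (by linarith),
    h_shift, ← mul_assoc, ← mul_rpow hx₁.le (by positivity), mul_one_div_cancel hx₁.ne',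
    one_rpow, one_mul]

lemma rpow_mul_apply_one_div {α : ℝ} {h : ℝ → ℝ} (hper : Function.Periodic h 1)
    (hanti : ∀ x : ℝ, 0 ≤ x → x ≤ 1 → h x = -h (1 - x))
    (hfe : ∀ z : ℝ, 1 / 2 ≤ z → z ≤ 1 → h z = z ^ α * h (2 - 1 / z)) {x : ℝ} (hx : 2 ≤ x) :
    x ^ α * h (1 / x) = -h x := by
  suffices ∀ n : ℕ, ∀ x : ℝ, 2 ≤ x → x ≤ n + 3 → x ^ α * h (1 / x) = -h x by
    obtain ⟨n, hn⟩ := exists_nat_ge x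
    exact this n x hx (by linarith)
  intro n
  induction n with
  | zero =>
    intro x hx₂ hx₃
    rw [rpow_mul_apply_one_div_eq_sub_one hanti hfe hx₂,
      sub_one_rpow_mul_apply_one_div_sub_one hper hanti hfe hx₂ (by simpa using hx₃)]
  | succ n ih =>
    intro x hx₂ hxn
    rcases le_or_gt x (n + 3) with hle | hgt
    · exact ih x hx₂ hle
    · have hn : (0 : ℝ) ≤ n := n.cast_nonneg
      rw [rpow_mul_apply_one_div_eq_sub_one hanti hfe hx₂,
        ih (x - 1) (by linarith) (by push_cast at hxn; linarith), hper.sub_eq]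

theorem stmt11_general (α : ℝ) (h : ℝ → ℝ)
    (hper : ∀ x : ℝ, h (x + 1) = h x)
    (hanti : ∀ x : ℝ, 0 ≤ x → x ≤ 1 → h x = -h (1 - x))
    (hfe : ∀ z : ℝ, 1 / 2 ≤ z → z ≤ 1 → h z = z ^ α * h (2 - 1 / z)) :
    ∀ x : ℝ, 2 ≤ x → h x = x ^ α * h (2 - 1 / x) := by
  intro x hx
  have h_inv_le : 1 / x ≤ 1 := by rw [div_le_one (by linarith)]; linarith
  have h_shift : h (2 - 1 / x) = -h (1 / x) := by
    rw [show 2 - 1 / x = 1 - 1 / x + 1 by ring, hper,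
      apply_one_sub_of_antisymm hanti (by positivity) h_inv_le]
  rw [h_shift, mul_neg, rpow_mul_apply_one_div hper hanti hfe hx, neg_neg]

/-- Under the hypotheses on the periodically extended `h`, the equation
`h(x) = x^α h(2 - 1/x)` holds for all `x ∈ [2,∞)`. -/
theorem stmt11 (α : ℝ) (hα : 0 < α) (h : ℝ → ℝ)
    (hper : ∀ x : ℝ, h (x + 1) = h x)
    (hanti : ∀ x : ℝ, 0 ≤ x → x ≤ 1 → h x = -h (1 - x))
    (hfe : ∀ z : ℝ, 1 / 2 ≤ z → z ≤ 1 → h z = z ^ α * h (2 - 1 / z)) :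
    ∀ x : ℝ, 2 ≤ x → h x = x ^ α * h (2 - 1 / x) :=
  stmt11_general α h hper hanti hfe
end

section
/- Let α > 0 and let h : ℝ → ℝ satisfy: (i) h(x+1) = h(x) for all x ∈ ℝ; (ii) h(x) = −h(1−x) for all x ∈ [0,1]; (iii) h(z) = z^α · h(2 − 1/z) for all z ∈ [1/2, 1]. Then h(x) = x^α · h(2 − 1/x) for all x ∈ (0, 1/2]. -/
/-!
Write `x = 1/t` with `t ≥ 2`. Anti-symmetry, the functional equation at `1 - 1/t ∈ [1/2, 1]` and
anti-symmetry once more give `h (1/t) = ((t-1)/t)^α · h (1/(t-1))`, while periodicity gives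
`h (2 - t) = h (2 - (t-1))`. Hence the identity at `1/(t-1)` implies it at `1/t`, and since it holds
for `t ∈ [1, 2]` by hypothesis, induction on `⌈t⌉` propagates it to all `t ≥ 1`.
-/

open Real

theorem forall_ge_one_of_Icc_of_sub_one {Q : ℝ → Prop} (hbase : ∀ t, 1 ≤ t → t ≤ 2 → Q t)
    (hstep : ∀ t, 2 ≤ t → Q (t - 1) → Q t) : ∀ t, 1 ≤ t → Q t := by
  have bounded : ∀ n : ℕ, ∀ t : ℝ, 1 ≤ t → t ≤ n + 2 → Q t := by
    intro n
    induction n with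
    | zero => simpa using hbase
    | succ n ih =>
      intro t ht1 htn
      rcases le_or_gt t 2 with ht2 | ht2
      · exact hbase t ht1 ht2
      · exact hstep t ht2.le (ih (t - 1) (by linarith) (by push_cast at htn; linarith))
  intro t ht
  exact bounded ⌈t⌉₊ t ht (by linarith [Nat.le_ceil t])

theorem apply_inv_eq_rpow_mul_apply_inv_sub_one {α : ℝ} {h : ℝ → ℝ}
    (hanti : ∀ x : ℝ, 0 ≤ x → x ≤ 1 → h x = -h (1 - x))
    (hfe : ∀ z : ℝ, 1 / 2 ≤ z → z ≤ 1 → h z = z ^ α * h (2 - 1 / z))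
    {t : ℝ} (ht : 2 ≤ t) : h t⁻¹ = ((t - 1) / t) ^ α * h (t - 1)⁻¹ := by
  have ht0 : 0 < t := by linarith
  have ht1 : 0 < t - 1 := by linarith
  have hinv : t⁻¹ ≤ 1 / 2 := by rw [inv_le_comm₀ ht0 (by norm_num)]; linarith
  have hsub : 1 - t⁻¹ = (t - 1) / t := by field_simp
  have hfe_arg : 2 - 1 / ((t - 1) / t) = (t - 2) / (t - 1) := by field_simp; ring
  have hanti_arg : 1 - (t - 2) / (t - 1) = (t - 1)⁻¹ := by field_simp; ring
  have hmid0 : 0 ≤ (t - 2) / (t - 1) := div_nonneg (by linarith) ht1.le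
  have hmid1 : (t - 2) / (t - 1) ≤ 1 := (div_le_one ht1).2 (by linarith)
  calc h t⁻¹ = -h ((t - 1) / t) := by
        rw [hanti t⁻¹ (by positivity) (by linarith), hsub]
    _ = -(((t - 1) / t) ^ α * h ((t - 2) / (t - 1))) := by
        rw [hfe _ (by rw [← hsub]; linarith) (by rw [← hsub]; linarith [inv_pos.2 ht0]), hfe_arg]
    _ = ((t - 1) / t) ^ α * h (t - 1)⁻¹ := by
        rw [hanti _ hmid0 hmid1, hanti_arg]; ring

theorem stmt13_general (α : ℝ) (h : ℝ → ℝ)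
    (hper : ∀ x : ℝ, h (x + 1) = h x)
    (hanti : ∀ x : ℝ, 0 ≤ x → x ≤ 1 → h x = -h (1 - x))
    (hfe : ∀ z : ℝ, 1 / 2 ≤ z → z ≤ 1 → h z = z ^ α * h (2 - 1 / z)) :
    ∀ x : ℝ, 0 < x → x ≤ 1 / 2 → h x = x ^ α * h (2 - 1 / x) := by
  have hinv : ∀ t, 1 ≤ t → h t⁻¹ = t⁻¹ ^ α * h (2 - t) := by
    refine forall_ge_one_of_Icc_of_sub_one (fun t ht1 ht2 => ?_) (fun t ht2 ih => ?_)
    · simpa using hfe t⁻¹ (by rw [one_div]; gcongr) (inv_le_one_of_one_le₀ ht1)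
    · have hpos : 0 < t - 1 := by linarith
      rw [apply_inv_eq_rpow_mul_apply_inv_sub_one hanti hfe ht2, ih, ← mul_assoc,
        ← mul_rpow (by positivity) (by positivity), ← hper (2 - t)]
      congr 2
      · field_simp
      · ring
  intro x hx0 hx2
  simpa using hinv x⁻¹ (by rw [one_le_inv₀ hx0]; linarith)

/-- Under the hypotheses on the periodically extended `h`, the equation
`h(x) = x^α h(2 - 1/x)` holds for all `x ∈ (0, 1/2]`. -/
theorem stmt13 (α : ℝ) (hα : 0 < α) (h : ℝ → ℝ)
    (hper : ∀ x : ℝ, h (x + 1) = h x)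
    (hanti : ∀ x : ℝ, 0 ≤ x → x ≤ 1 → h x = -h (1 - x))
    (hfe : ∀ z : ℝ, 1 / 2 ≤ z → z ≤ 1 → h z = z ^ α * h (2 - 1 / z)) :
    ∀ x : ℝ, 0 < x → x ≤ 1 / 2 → h x = x ^ α * h (2 - 1 / x) :=
  stmt13_general α h hper hanti hfe
end

section
/- Let α > 0 and let h : ℝ → ℝ satisfy: (i) h(x+1) = h(x) for all x ∈ ℝ; (ii) h(x) = −h(1−x) for all x ∈ [0,1]; (iii) h(z) = z^α · h(2 − 1/z) for all z ∈ [1/2, 1]. Then h(x) = (−x)^α · h(2 − 1/x) for all x < 0, and h(0) = 0. -/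
/-!
Antisymmetry turns the functional equation at `z = 1/u` (`1 ≤ u ≤ 2`) into
`u ^ α * h u⁻¹ = -h u`, and at `z = 1 - 1/u` (`u ≥ 2`) into a relation between `h u⁻¹` and
`h (u - 1)⁻¹` that carries this identity from `u - 1` to `u`; induction extends it to all `u ≥ 1`,
and it is symmetric under `u ↦ u⁻¹`, so it holds for all `u > 0`. Since `h` is odd and
1-periodic, the identity at `u = -x` is the claim.
-/

open Function

section

variable {α : ℝ} {h : ℝ → ℝ}

theorem neg_eq_of_periodic_of_antisymm (hper : Periodic h 1)
    (hanti : ∀ x : ℝ, 0 ≤ x → x ≤ 1 → h x = -h (1 - x)) (x : ℝ) : h (-x) = -h x := by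
  have hfract : h (Int.fract x) = h x := by
    rw [← Int.self_sub_floor, ← mul_one (⌊x⌋ : ℝ), hper.sub_int_mul_eq]
  have hneg : h (-Int.fract x) = h (-x) := by
    rw [← hper.sub_int_mul_eq ⌊x⌋, mul_one, ← neg_add', Int.fract_add_floor]
  rw [← hneg, ← hper.sub_eq', ← hfract,
    hanti _ (Int.fract_nonneg x) (Int.fract_lt_one x).le, neg_neg]

theorem rpow_mul_apply_inv_of_le_two (hper : Periodic h 1)
    (hanti : ∀ x : ℝ, 0 ≤ x → x ≤ 1 → h x = -h (1 - x))
    (hfe : ∀ z : ℝ, 1 / 2 ≤ z → z ≤ 1 → h z = z ^ α * h (2 - 1 / z))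
    {u : ℝ} (hu₁ : 1 ≤ u) (hu₂ : u ≤ 2) : u ^ α * h u⁻¹ = -h u := by
  have hu : 0 < u := by linarith
  have hz := hfe u⁻¹ (by rw [one_div]; exact inv_anti₀ hu hu₂) (inv_le_one_of_one_le₀ hu₁)
  have h2 : h (2 - u) = -h u := by
    rw [← neg_eq_of_periodic_of_antisymm hper hanti, ← (hper.nat_mul 2).sub_eq']
    norm_num
  rw [hz, one_div, inv_inv, h2, Real.inv_rpow hu.le, ← mul_assoc,
    mul_inv_cancel₀ (Real.rpow_pos_of_pos hu α).ne', one_mul]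

theorem apply_inv_eq_of_two_le (hanti : ∀ x : ℝ, 0 ≤ x → x ≤ 1 → h x = -h (1 - x))
    (hfe : ∀ z : ℝ, 1 / 2 ≤ z → z ≤ 1 → h z = z ^ α * h (2 - 1 / z))
    {u : ℝ} (hu : 2 ≤ u) : h u⁻¹ = (1 - u⁻¹) ^ α * h (u - 1)⁻¹ := by
  have hu₀ : 0 < u := by linarith
  have hu₁ : 1 ≤ u - 1 := by linarith
  have hz := hfe (1 - u⁻¹) (by rw [le_sub_comm, ← one_div, div_le_iff₀ hu₀]; linarith)
    (by simp [hu₀.le])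
  have harg : 2 - 1 / (1 - u⁻¹) = 1 - (u - 1)⁻¹ := by
    field_simp
    ring
  have hv := hanti u⁻¹ (by positivity) (inv_le_one_of_one_le₀ (by linarith))
  have hw := hanti (u - 1)⁻¹ (by positivity) (inv_le_one_of_one_le₀ hu₁)
  rw [harg] at hz
  rw [hv, hz, hw]
  ring

theorem rpow_mul_apply_inv_of_one_le (hper : Periodic h 1)
    (hanti : ∀ x : ℝ, 0 ≤ x → x ≤ 1 → h x = -h (1 - x))
    (hfe : ∀ z : ℝ, 1 / 2 ≤ z → z ≤ 1 → h z = z ^ α * h (2 - 1 / z))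
    {u : ℝ} (hu : 1 ≤ u) : u ^ α * h u⁻¹ = -h u := by
  obtain ⟨n, hn⟩ := exists_nat_ge u
  induction n generalizing u with
  | zero => norm_num at hn; linarith
  | succ n ih =>
    rcases le_total u 2 with hu₂ | hu₂
    · exact rpow_mul_apply_inv_of_le_two hper hanti hfe hu hu₂
    · have hprev := ih (u := u - 1) (by linarith) (by push_cast at hn; linarith)
      rw [apply_inv_eq_of_two_le hanti hfe hu₂, ← mul_assoc,
        ← Real.mul_rpow (by linarith) (by simp [inv_le_one_of_one_le₀ hu]),
        mul_one_sub, mul_inv_cancel₀ (by linarith), hprev, hper.sub_eq]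

theorem rpow_mul_apply_inv (hper : Periodic h 1)
    (hanti : ∀ x : ℝ, 0 ≤ x → x ≤ 1 → h x = -h (1 - x))
    (hfe : ∀ z : ℝ, 1 / 2 ≤ z → z ≤ 1 → h z = z ^ α * h (2 - 1 / z))
    {u : ℝ} (hu : 0 < u) : u ^ α * h u⁻¹ = -h u := by
  rcases le_total 1 u with hu₁ | hu₁
  · exact rpow_mul_apply_inv_of_one_le hper hanti hfe hu₁
  · have hinv := rpow_mul_apply_inv_of_one_le hper hanti hfe (one_le_inv_iff₀.2 ⟨hu, hu₁⟩)
    rw [inv_inv, ← neg_eq_iff_eq_neg, eq_comm] at hinv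
    rw [hinv, Real.inv_rpow hu.le, mul_neg, ← mul_assoc,
      mul_inv_cancel₀ (Real.rpow_pos_of_pos hu α).ne', one_mul]

end

theorem stmt14_general (α : ℝ) (h : ℝ → ℝ)
    (hper : ∀ x : ℝ, h (x + 1) = h x)
    (hanti : ∀ x : ℝ, 0 ≤ x → x ≤ 1 → h x = -h (1 - x))
    (hfe : ∀ z : ℝ, 1 / 2 ≤ z → z ≤ 1 → h z = z ^ α * h (2 - 1 / z)) :
    (∀ x : ℝ, x < 0 → h x = (-x) ^ α * h (2 - 1 / x)) ∧ h 0 = 0 := by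
  have hodd := neg_eq_of_periodic_of_antisymm hper hanti
  refine ⟨fun x hx => ?_, self_eq_neg.1 (by simpa using hodd 0)⟩
  have harg : 2 - 1 / x = (-x)⁻¹ + 1 + 1 := by rw [inv_neg, one_div]; ring
  rw [harg, hper, hper, rpow_mul_apply_inv hper hanti hfe (neg_pos.2 hx), hodd, neg_neg]

/-- Under the hypotheses on the periodically extended `h`, the equation
`h(x) = (-x)^α h(2 - 1/x)` holds for all `x < 0`, and `h(0) = 0`. -/
theorem stmt14 (α : ℝ) (hα : 0 < α) (h : ℝ → ℝ)
    (hper : ∀ x : ℝ, h (x + 1) = h x)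
    (hanti : ∀ x : ℝ, 0 ≤ x → x ≤ 1 → h x = -h (1 - x))
    (hfe : ∀ z : ℝ, 1 / 2 ≤ z → z ≤ 1 → h z = z ^ α * h (2 - 1 / z)) :
    (∀ x : ℝ, x < 0 → h x = (-x) ^ α * h (2 - 1 / x)) ∧ h 0 = 0 :=
  stmt14_general α h hper hanti hfe
end

section
/- Let A and B be the elements of SL(2,ℤ) given by the matrices A = [[2,−1],[1,0]] and B = [[−1,1],[1,0]]. Then the images of A and B² in the quotient of SL(2,ℤ) by its center (the modular group PSL(2,ℤ)) generate the whole quotient group; equivalently, the subgroup of SL(2,ℤ) generated by A, B² and −I is all of SL(2,ℤ). -/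
/-!
`SL(2,ℤ)` is generated by `S = [[0,-1],[1,0]]` and `T = [[1,1],[0,1]]`, so it suffices to write
`S` and `T` as words in `A` and `B²`. The matrix identities `T B² A = B²` and `T S T B² = A` give
`T = B² A⁻¹ B⁻²` and then `S = T⁻¹ A B⁻² T⁻¹`.
-/

open Matrix

/-- The matrix `A = [[2,-1],[1,0]]`. -/
def matA : Matrix (Fin 2) (Fin 2) ℤ := !![2, -1; 1, 0]

/-- The matrix `B = [[-1,1],[1,0]]` (the homography `x ↦ (1-x)/x`). -/
def matB : Matrix (Fin 2) (Fin 2) ℤ := !![-1, 1; 1, 0]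

/-- `A` as an element of `SL(2,ℤ)`. -/
def stmtA : Matrix.SpecialLinearGroup (Fin 2) ℤ :=
  ⟨matA, by norm_num [matA, Matrix.det_fin_two_of]⟩

/-- `B²` as an element of `SL(2,ℤ)`. -/
def stmtB2 : Matrix.SpecialLinearGroup (Fin 2) ℤ :=
  ⟨matB ^ 2, by
    norm_num [matB, pow_two, Matrix.mul_fin_two, Matrix.det_fin_two_of]⟩

/-- `-I = [[-1,0],[0,-1]]` as an element of `SL(2,ℤ)`. -/
def stmtNegI : Matrix.SpecialLinearGroup (Fin 2) ℤ :=
  ⟨!![-1, 0; 0, -1], by norm_num [Matrix.det_fin_two_of]⟩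

open ModularGroup

lemma T_mul_stmtB2_mul_stmtA : T * stmtB2 * stmtA = stmtB2 := by
  ext i j
  simp only [Matrix.SpecialLinearGroup.coe_mul]
  fin_cases i <;> fin_cases j <;> simp [T, stmtA, stmtB2, matA, matB, pow_two]

lemma T_mul_S_mul_T_mul_stmtB2 : T * S * T * stmtB2 = stmtA := by
  ext i j
  simp only [Matrix.SpecialLinearGroup.coe_mul]
  fin_cases i <;> fin_cases j <;> simp [T, S, stmtA, stmtB2, matA, matB, pow_two]

/-- The images of `A` and `B²` in the modular group `PSL(2,ℤ) = SL(2,ℤ)/{±I}`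
generate it; equivalently, the subgroup of `SL(2,ℤ)` generated by `A`, `B²` and `-I` is all of
`SL(2,ℤ)`. -/
theorem stmt15 :
    Subgroup.closure ({stmtA, stmtB2, stmtNegI} :
      Set (Matrix.SpecialLinearGroup (Fin 2) ℤ)) = ⊤ := by
  set H := Subgroup.closure ({stmtA, stmtB2, stmtNegI} :
      Set (Matrix.SpecialLinearGroup (Fin 2) ℤ))
  have hA : stmtA ∈ H := Subgroup.subset_closure (by simp)
  have hB2 : stmtB2 ∈ H := Subgroup.subset_closure (by simp)
  have hT : T ∈ H := by
    have hT_word : T = (T * stmtB2 * stmtA) * stmtA⁻¹ * stmtB2⁻¹ := by group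
    rw [hT_word, T_mul_stmtB2_mul_stmtA]
    exact H.mul_mem (H.mul_mem hB2 (H.inv_mem hA)) (H.inv_mem hB2)
  have hS : S ∈ H := by
    have hS_word : S = T⁻¹ * (T * S * T * stmtB2) * stmtB2⁻¹ * T⁻¹ := by group
    rw [hS_word, T_mul_S_mul_T_mul_stmtB2]
    exact H.mul_mem (H.mul_mem (H.mul_mem (H.inv_mem hT) hA) (H.inv_mem hB2)) (H.inv_mem hT)
  rw [eq_top_iff, ← SpecialLinearGroup.SL2Z_generators, Subgroup.closure_le]
  rintro _ (rfl | rfl)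
  exacts [hS, hT]
end

section
/- For every nonzero rational number r there exist n ∈ ℕ and a finite sequence of rationals x₀, x₁, …, xₙ with x₀ = 1/2, xₙ = r, and xᵢ ≠ 0 for all i, such that for each i < n at least one of the following holds: x_{i+1} = (2xᵢ − 1)/xᵢ, or x_{i+1} = (1 − xᵢ)/xᵢ, or xᵢ = (2x_{i+1} − 1)/x_{i+1}, or xᵢ = (1 − x_{i+1})/x_{i+1}. -/
/-- One step of the process. -/
abbrev Step17 (a b : ℚ) : Prop :=
  b = (2 * a - 1) / a ∨ b = (1 - a) / a ∨ a = (2 * b - 1) / b ∨ a = (1 - b) / b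

/-- Reachability from 1/2. -/
abbrev Reach17 (r : ℚ) : Prop :=
  ∃ (n : ℕ) (x : ℕ → ℚ),
      x 0 = 1 / 2 ∧ x n = r ∧ (∀ i ≤ n, x i ≠ 0) ∧
      ∀ i < n,
        x (i + 1) = (2 * x i - 1) / x i ∨
        x (i + 1) = (1 - x i) / x i ∨
        x i = (2 * x (i + 1) - 1) / x (i + 1) ∨
        x i = (1 - x (i + 1)) / x (i + 1)

lemma reach17_half : Reach17 (1/2) := by
  refine ⟨0, fun _ => 1/2, rfl, rfl, ?_, ?_⟩
  · intro i _; norm_num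
  · intro i hi; omega

lemma reach17_step {a b : ℚ} (h : Reach17 a) (hs : Step17 a b) (hb : b ≠ 0) : Reach17 b := by
  obtain ⟨n, x, h0, hn, hnz, hstep⟩ := h
  refine ⟨n + 1, fun i => if i ≤ n then x i else b, ?_, ?_, ?_, ?_⟩
  · simp [Nat.zero_le, h0]
  · simp
  · intro i hi
    by_cases hin : i ≤ n
    · simpa [hin] using hnz i hin
    · simpa [hin] using hb
  · intro i hi
    by_cases hin : i < n
    · have h1 : i ≤ n := le_of_lt hin
      have h2 : i + 1 ≤ n := hin
      simpa [h1, h2] using hstep i hin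
    · have hieq : i = n := by omega
      subst hieq
      have h2 : ¬ (i + 1 ≤ i) := by omega
      simpa [le_refl, h2, hn] using hs

lemma mu_div_le (u v : ℤ) (hu : u ≠ 0) (hv : v ≠ 0) :
    ((u : ℚ) / (v : ℚ)).num.natAbs + ((u : ℚ) / (v : ℚ)).den ≤ u.natAbs + v.natAbs := by
  rw [← Rat.divInt_eq_div]
  have h1 : (Rat.divInt u v).num ∣ u := Rat.num_dvd u hv
  have h2 : ((Rat.divInt u v).den : ℤ) ∣ v := Rat.den_dvd u v
  have h3 : (Rat.divInt u v).num.natAbs ≤ u.natAbs :=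
    Nat.le_of_dvd (Int.natAbs_pos.mpr hu) (Int.natAbs_dvd_natAbs.mpr h1)
  have h4 : (Rat.divInt u v).den ≤ v.natAbs := by
    have := Int.natAbs_dvd_natAbs.mpr h2
    simpa using Nat.le_of_dvd (Int.natAbs_pos.mpr hv) this
  omega

/-- Explicit small base cases. -/
lemma reach17_one : Reach17 1 := by
  refine reach17_step reach17_half ?_ (by norm_num)
  right; left; norm_num

lemma reach17_twothirds : Reach17 (2/3) := by
  refine reach17_step reach17_half ?_ (by norm_num)
  right; right; left; norm_num

lemma reach17_threequarters : Reach17 (3/4) := by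
  refine reach17_step reach17_twothirds ?_ (by norm_num)
  right; right; left; norm_num

lemma reach17_third : Reach17 (1/3) := by
  refine reach17_step reach17_threequarters ?_ (by norm_num)
  right; left; norm_num

lemma reach17_two : Reach17 2 := by
  refine reach17_step reach17_third ?_ (by norm_num)
  right; left; norm_num

lemma reach17_negone : Reach17 (-1) := by
  refine reach17_step reach17_third ?_ (by norm_num)
  left; norm_num

lemma reach17_neghalf : Reach17 (-1/2) := by
  refine reach17_step reach17_two ?_ (by norm_num)
  right; left; norm_num

lemma reach17_all : ∀ (N : ℕ) (a : ℚ), a.num.natAbs + a.den ≤ N → a ≠ 0 → Reach17 a := by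
  intro N
  induction N with
  | zero => intro a h _; have := a.pos; omega
  | succ n ih =>
    intro a hle ha
    by_cases hsmall : a.num.natAbs + a.den ≤ n
    · exact ih a hsmall ha
    set p : ℤ := a.num with hp
    set q : ℤ := (a.den : ℤ) with hqdef
    have hq0 : (0:ℤ) < q := by rw [hqdef]; exact_mod_cast a.pos
    have hqNat : q.natAbs = a.den := by rw [hqdef]; exact Int.natAbs_natCast _
    have hqQ : (q : ℚ) ≠ 0 := by
      have : (0:ℚ) < (q:ℚ) := by exact_mod_cast hq0
      exact this.ne'
    have hp0 : p ≠ 0 := Rat.num_ne_zero.mpr ha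
    have haeq : a = (p : ℚ) / (q : ℚ) := by
      rw [hp, hqdef]; push_cast; exact (Rat.num_div_den a).symm
    by_cases h1 : a = 1
    · rw [h1]; exact reach17_one
    by_cases h2 : a = 2
    · rw [h2]; exact reach17_two
    by_cases h3 : a = -1
    · rw [h3]; exact reach17_negone
    by_cases h4 : a = -1/2
    · rw [h4]; exact reach17_neghalf
    have hpq1 : p ≠ q := by
      intro h; apply h1; rw [haeq, h, div_self hqQ]
    rcases lt_trichotomy p 0 with hneg | hzero | hpos
    · -- negative case
      have hone : (1:ℚ) + a ≠ 0 := by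
        intro h; apply h3; linarith
      have hqp0 : q + p ≠ 0 := by
        intro h
        apply h3
        rw [haeq]
        have hpe : p = -q := by omega
        rw [hpe]; push_cast; rw [neg_div, div_self hqQ]
      have hqp0Q : ((q + p : ℤ) : ℚ) ≠ 0 := by exact_mod_cast hqp0
      rcases lt_trichotomy (q + 2 * p) 0 with hlt | heq | hgt
      · -- q + 2p < 0 : one step b = 1/(1+a)
        set b : ℚ := 1 / (1 + a) with hb
        have hbeq : b = (q : ℚ) / ((q + p : ℤ) : ℚ) := by
          rw [hb, haeq]
          push_cast at hqp0Q ⊢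
          field_simp
          try ring
        have hb0 : b ≠ 0 := by
          rw [hbeq]; exact div_ne_zero hqQ hqp0Q
        have hmu : b.num.natAbs + b.den ≤ n := by
          have h5 := mu_div_le q (q + p) hq0.ne' hqp0
          rw [← hbeq] at h5
          omega
        refine reach17_step (ih b hmu hb0) ?_ ha
        right; left
        rw [hb]
        field_simp
        try ring
      · exfalso
        apply h4
        rw [haeq]
        have hpe : 2 * p = -q := by omega
        have : (2:ℚ) * (p:ℚ) = -(q:ℚ) := by exact_mod_cast hpe
        field_simp
        try ring
        linarith
      · -- q + 2p > 0 : three steps via e = a/(1+a)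
        have htwo : (1:ℚ) + 2 * a ≠ 0 := by
          intro h; apply h4; linarith
        set e : ℚ := a / (1 + a) with he
        have heeq : e = (p : ℚ) / ((q + p : ℤ) : ℚ) := by
          rw [he, haeq]
          push_cast at hqp0Q ⊢
          field_simp
          try ring
        have he0 : e ≠ 0 := by
          rw [heeq]
          exact div_ne_zero (by exact_mod_cast hp0) hqp0Q
        have hmu : e.num.natAbs + e.den ≤ n := by
          have h5 := mu_div_le p (q + p) hp0 hqp0
          rw [← heeq] at h5
          omega
        have hre : Reach17 e := ih e hmu he0
        set d : ℚ := (1 + a) / (1 + 2 * a) with hd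
        have hd0 : d ≠ 0 := div_ne_zero hone htwo
        have hrd : Reach17 d := by
          refine reach17_step hre ?_ hd0
          right; right; right
          rw [he, hd]
          rw [one_sub_div htwo, div_div_div_cancel_right₀ htwo]
          field_simp
          try ring
        set c : ℚ := 1 / (1 + a) with hc
        have hc0 : c ≠ 0 := by
          rw [hc]; exact div_ne_zero one_ne_zero hone
        have hrc : Reach17 c := by
          refine reach17_step hrd ?_ hc0
          left
          rw [hc, hd]
          rw [mul_div_assoc', div_sub_one htwo, div_div_div_cancel_right₀ htwo]
          field_simp
          try ring
        refine reach17_step hrc ?_ ha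
        right; left
        rw [hc]
        field_simp
        try ring
    · exact absurd hzero hp0
    · rcases lt_trichotomy p q with hlt | heq | hgt
      · -- 0 < p < q : b = (1-a)/a
        set b : ℚ := (1 - a) / a with hb
        have hqp0 : q - p ≠ 0 := by omega
        have hqp0Q : ((q - p : ℤ) : ℚ) ≠ 0 := by exact_mod_cast hqp0
        have hpQ : (p : ℚ) ≠ 0 := by exact_mod_cast hp0
        have hbeq : b = ((q - p : ℤ) : ℚ) / (p : ℚ) := by
          rw [hb, haeq]
          push_cast at hqp0Q ⊢
          field_simp
          try ring
        have hb0 : b ≠ 0 := by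
          rw [hbeq]; exact div_ne_zero hqp0Q hpQ
        have hmu : b.num.natAbs + b.den ≤ n := by
          have h5 := mu_div_le (q - p) p hqp0 hp0
          rw [← hbeq] at h5
          omega
        refine reach17_step (ih b hmu hb0) ?_ ha
        right; right; right
        rw [hb]
      · exact absurd heq hpq1
      · -- p > q : b = 1/(2-a)
        have h2q : p ≠ 2 * q := by
          intro h
          apply h2
          rw [haeq, h]
          push_cast
          rw [mul_div_assoc, div_self hqQ, mul_one]
        have htwoa : (2:ℚ) - a ≠ 0 := by
          intro h; apply h2; linarith
        set b : ℚ := 1 / (2 - a) with hb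
        have hqp0 : 2 * q - p ≠ 0 := by omega
        have hqp0Q : ((2 * q - p : ℤ) : ℚ) ≠ 0 := by exact_mod_cast hqp0
        have hbeq : b = (q : ℚ) / ((2 * q - p : ℤ) : ℚ) := by
          rw [hb, haeq]
          push_cast at hqp0Q ⊢
          field_simp
          try ring
        have hb0 : b ≠ 0 := by
          rw [hbeq]; exact div_ne_zero hqQ hqp0Q
        have hmu : b.num.natAbs + b.den ≤ n := by
          have h5 := mu_div_le q (2 * q - p) hq0.ne' hqp0
          rw [← hbeq] at h5
          omega
        refine reach17_step (ih b hmu hb0) ?_ ha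
        left
        rw [hb]
        field_simp
        try ring

/-- Every nonzero rational `r` is reachable from `1/2` by a finite sequence of
nonzero rationals in which each step applies one of the homographies `α(x) = (2x-1)/x`,
`β(x) = (1-x)/x`, or one of their inverses. -/
theorem stmt17 (r : ℚ) (hr : r ≠ 0) :
    ∃ (n : ℕ) (x : ℕ → ℚ),
      x 0 = 1 / 2 ∧ x n = r ∧ (∀ i ≤ n, x i ≠ 0) ∧
      ∀ i < n,
        x (i + 1) = (2 * x i - 1) / x i ∨
        x (i + 1) = (1 - x i) / x i ∨
        x i = (2 * x (i + 1) - 1) / x (i + 1) ∨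
        x i = (1 - x (i + 1)) / x (i + 1) :=
  reach17_all (r.num.natAbs + r.den) r le_rfl hr
end

section
/- Let α > 0 with α ≠ 1, and define s_α : [0,1] → ℝ by s_α(x) = (1/(1−α)) · (x^α + (1−x)^α − 1). Then s_α satisfies s_α(1−x) + (1−x)^α · s_α(y/(1−x)) = s_α(y) + (1−y)^α · s_α((1−x−y)/(1−y)) for all x, y ∈ [0,1) with x + y ≤ 1. -/
/-- For `α ≠ 1`, the generalized information function `s_α(x) = (1/(1-α))(x^α + (1-x)^α - 1)`. -/
noncomputable def sAlpha (α : ℝ) (x : ℝ) : ℝ := (1 / (1 - α)) * (x ^ α + (1 - x) ^ α - 1)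

theorem rpow_mul_sAlpha_div (α : ℝ) {a b t : ℝ} (ha : 0 ≤ a) (hb : 0 ≤ b) (hab : a + b = t) :
    t ^ α * sAlpha α (a / t) = 1 / (1 - α) * (a ^ α + b ^ α - t ^ α) := by
  rcases (show 0 ≤ t by linarith).eq_or_lt with rfl | ht
  · obtain ⟨rfl, rfl⟩ : a = 0 ∧ b = 0 := ⟨by linarith, by linarith⟩
    rcases eq_or_ne α 0 with rfl | hα
    · simp [sAlpha]
    · simp [sAlpha, Real.zero_rpow hα]
  · have hsub : 1 - a / t = b / t := by
      field_simp
      linarith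
    rw [sAlpha, hsub, Real.div_rpow ha ht.le, Real.div_rpow hb ht.le]
    field_simp [(Real.rpow_pos_of_pos ht α).ne']

theorem stmt18_general (α : ℝ) :
    ∀ x y : ℝ, 0 ≤ x → x < 1 → 0 ≤ y → y < 1 → x + y ≤ 1 →
      sAlpha α (1 - x) + (1 - x) ^ α * sAlpha α (y / (1 - x))
        = sAlpha α y + (1 - y) ^ α * sAlpha α ((1 - x - y) / (1 - y)) := by
  intro x y hx _ hy _ hxy
  have hz : 0 ≤ 1 - x - y := by linarith
  -- Both sides equal `(x^α + y^α + (1-x-y)^α - 1) / (1-α)`, which is symmetric in `x, y, 1-x-y`.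
  rw [rpow_mul_sAlpha_div α hy hz (by ring), rpow_mul_sAlpha_div α hz hx (by ring)]
  simp only [sAlpha, sub_sub_cancel]
  ring

/-- For `0 < α`, `α ≠ 1`, the function `s_α` satisfies the fundamental functional
equation. -/
theorem stmt18 (α : ℝ) (hα : 0 < α) (hα1 : α ≠ 1) :
    ∀ x y : ℝ, 0 ≤ x → x < 1 → 0 ≤ y → y < 1 → x + y ≤ 1 →
      sAlpha α (1 - x) + (1 - x) ^ α * sAlpha α (y / (1 - x))
        = sAlpha α y + (1 - y) ^ α * sAlpha α ((1 - x - y) / (1 - y)) :=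
  stmt18_general α
end

section
/- Let α > 0 with α ≠ 1, let E_X and E_Y be finite nonempty types, and let p : E_X × E_Y → ℝ be a probability distribution (p(x,y) ≥ 0 for all (x,y) and the total sum is 1). Assume the marginal p_X(x) = Σ_y p(x,y) is strictly positive for every x ∈ E_X. Define the Tsallis α-entropy of a finitely supported distribution q by S_α(q) = (1/(1−α)) · (Σ q(i)^α − 1). Then S_α(p) = S_α(p_X) + Σ_{x ∈ E_X} p_X(x)^α · S_α(p(x,·)/p_X(x)), where p(x,·)/p_X(x) denotes the conditional distribution y ↦ p(x,y)/p_X(x) on E_Y. -/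
open Finset

noncomputable def tsallisEntropy (α : ℝ) {E : Type*} [Fintype E] (q : E → ℝ) : ℝ :=
  (1 / (1 - α)) * (∑ i, q i ^ α - 1)

lemma sum_rpow_eq_mul_sum_div_rpow {ι : Type*} (s : Finset ι) (α : ℝ) {c : ℝ} (hc : 0 < c)
    {q : ι → ℝ} (hq : ∀ i ∈ s, 0 ≤ q i) :
    ∑ i ∈ s, q i ^ α = c ^ α * ∑ i ∈ s, (q i / c) ^ α := by
  rw [mul_sum]
  refine sum_congr rfl fun i hi => ?_
  rw [← Real.mul_rpow hc.le (div_nonneg (hq i hi) hc.le), mul_div_cancel₀ _ hc.ne']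

lemma rpow_mul_tsallisEntropy_div (α : ℝ) {E : Type*} [Fintype E] {c : ℝ} (hc : 0 < c)
    {q : E → ℝ} (hq : ∀ i, 0 ≤ q i) :
    c ^ α * tsallisEntropy α (fun i => q i / c) = (1 / (1 - α)) * (∑ i, q i ^ α - c ^ α) := by
  rw [tsallisEntropy, sum_rpow_eq_mul_sum_div_rpow univ α hc fun i _ => hq i]
  ring

theorem stmt19_general (α : ℝ)
    {EX EY : Type*} [Fintype EX] [Fintype EY]
    (p : EX × EY → ℝ) (hp0 : ∀ z, 0 ≤ p z)
    (hpos : ∀ x : EX, 0 < ∑ y, p (x, y)) :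
    tsallisEntropy α p
      = tsallisEntropy α (fun x : EX => ∑ y, p (x, y)) +
        ∑ x : EX, (∑ y, p (x, y)) ^ α *
          tsallisEntropy α (fun y : EY => p (x, y) / ∑ y', p (x, y')) := by
  have hconditional (x : EX) := rpow_mul_tsallisEntropy_div α (hpos x) fun y => hp0 (x, y)
  simp only [hconditional]
  simp only [tsallisEntropy, Fintype.sum_prod_type, ← mul_sum, sum_sub_distrib]
  ring

/-- the chain rule for the Tsallis `α`-entropy. If `p` is a probability
distribution on `E_X × E_Y` whose marginal `p_X` is everywhere positive, then
`S_α(p) = S_α(p_X) + ∑_x p_X(x)^α S_α(p(x,·)/p_X(x))`. -/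
theorem stmt19 (α : ℝ) (hα : 0 < α) (hα1 : α ≠ 1)
    {EX EY : Type*} [Fintype EX] [Fintype EY] [Nonempty EX] [Nonempty EY]
    (p : EX × EY → ℝ) (hp0 : ∀ z, 0 ≤ p z) (hp1 : ∑ z, p z = 1)
    (hpos : ∀ x : EX, 0 < ∑ y, p (x, y)) :
    tsallisEntropy α p
      = tsallisEntropy α (fun x : EX => ∑ y, p (x, y)) +
        ∑ x : EX, (∑ y, p (x, y)) ^ α *
          tsallisEntropy α (fun y : EY => p (x, y) / ∑ y', p (x, y')) :=
  stmt19_general α p hp0 hpos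
end
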